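/- arXiv:0803.2958 — 6 statements merged into one kernel-verified Lean document; each statement's English description precedes it below -/
import Mathlib

section
/- Let n ≥ 0, let a₁, ..., aₙ and a be nonnegative reals, let S be a finite set, and for each s ∈ S let r_{s,1}, ..., r_{s,n} ≥ 0 and b_s ≥ 0. Assume: (i) aᵢ + a = ∑_{s∈S} b_s·r_{s,i} for every i; (ii) aᵢ + aⱼ ≥ ∑_{s∈S} b_s·|r_{s,i} − r_{s,j}| for any two distinct i, j. Let f be convex on an interval I ⊆ ℝ, let w₁, ..., wₙ be nonnegative reals with ∑_v w_v ≠ 0 and ∑_v r_{s,v}·w_v ≠ 0 for all s ∈ S, and let x₁, ..., xₙ ∈ I. Then ∑_{i=1}^n aᵢ·wᵢ·f(xᵢ) + a·(∑_v w_v)·f((∑_v w_v·x_v)/(∑_v w_v)) ≥ ∑_{s∈S} b_s·(∑_v r_{s,v}·w_v)·f((∑_v r_{s,v}·w_v·x_v)/(∑_v r_{s,v}·w_v)). -/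
open Finset

lemma swap_helper {n : ℕ} {S : Type} [Fintype S] (b : S → ℝ) (p q : Fin n → ℝ)
    (c : S → Fin n → Fin n → ℝ) :
    ∑ s, b s * ∑ i, ∑ j, p i * q j * c s i j
      = ∑ i, ∑ j, p i * q j * ∑ s, b s * c s i j := by
  simp only [Finset.mul_sum]
  rw [Finset.sum_comm]
  refine Finset.sum_congr rfl fun i _ => ?_
  rw [Finset.sum_comm]
  refine Finset.sum_congr rfl fun j _ => ?_
  refine Finset.sum_congr rfl fun s _ => by ring

lemma abs_bound {n : ℕ} {S : Type} [Fintype S]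
    (a p q : Fin n → ℝ) (a' : ℝ) (r : S → Fin n → ℝ) (b : S → ℝ)
    (ha : ∀ i, 0 ≤ a i) (ha' : 0 ≤ a')
    (hp : ∀ i, 0 ≤ p i) (hq : ∀ i, 0 ≤ q i) (hpq : ∀ i, p i * q i = 0)
    (hr : ∀ s i, 0 ≤ r s i) (hb : ∀ s, 0 ≤ b s)
    (h1 : ∀ i, a i + a' = ∑ s, b s * r s i)
    (h2 : ∀ i j, i ≠ j → ∑ s, b s * |r s i - r s j| ≤ a i + a j)
    (hPN : ∑ i, p i ≤ ∑ i, q i) :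
    ∑ s, b s * |∑ v, r s v * (p v - q v)| ≤
      ∑ v, a v * (p v + q v) + a' * (∑ v, q v - ∑ v, p v) := by
  set P := ∑ i, p i with hP
  set Q := ∑ i, q i with hQ
  have hP0 : 0 ≤ P := Finset.sum_nonneg fun i _ => hp i
  have hQ0 : 0 ≤ Q := Finset.sum_nonneg fun i _ => hq i
  rcases eq_or_lt_of_le hQ0 with hQz | hQpos
  · have hqz : ∀ i, q i = 0 := fun i =>
      (Finset.sum_eq_zero_iff_of_nonneg (fun i _ => hq i)).1 hQz.symm i (mem_univ i)
    have hPz : P = 0 := le_antisymm (hQz ▸ (by rw [← hQz] at hPN; linarith)) hP0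
    have hpz : ∀ i, p i = 0 := fun i =>
      (Finset.sum_eq_zero_iff_of_nonneg (fun i _ => hp i)).1 hPz i (mem_univ i)
    simp [hpz, hqz, ← hQz, hPz]
  · have hQne : Q ≠ 0 := ne_of_gt hQpos
    have key : ∀ s, ∑ v, r s v * (p v - q v)
        = (1/Q) * (∑ i, ∑ j, p i * q j * (r s i - r s j))
          - ((Q - P)/Q) * ∑ j, r s j * q j := by
      intro s
      have e1 : ∑ i, ∑ j, p i * q j * (r s i - r s j)
          = (∑ i, r s i * p i) * Q - P * (∑ j, r s j * q j) := by
        have : ∀ i, ∑ j, p i * q j * (r s i - r s j)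
            = r s i * p i * Q - p i * (∑ j, r s j * q j) := by
          intro i
          rw [Finset.mul_sum, Finset.mul_sum, ← Finset.sum_sub_distrib]
          · congr 1; ext j; ring
        rw [Finset.sum_congr rfl (fun i _ => this i), Finset.sum_sub_distrib,
          ← Finset.sum_mul, ← Finset.sum_mul]
      rw [e1]
      have : ∑ v, r s v * (p v - q v) = ∑ v, r s v * p v - ∑ v, r s v * q v := by
        rw [← Finset.sum_sub_distrib]; congr 1; ext v; ring
      rw [this]
      field_simp
      ring
    have perS : ∀ s, b s * |∑ v, r s v * (p v - q v)|
        ≤ b s * ((1/Q) * (∑ i, ∑ j, p i * q j * |r s i - r s j|)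
          + ((Q - P)/Q) * ∑ j, r s j * q j) := by
      intro s
      apply mul_le_mul_of_nonneg_left _ (hb s)
      rw [key s]
      refine (abs_sub _ _).trans ?_
      have hD : |∑ i, ∑ j, p i * q j * (r s i - r s j)|
          ≤ ∑ i, ∑ j, p i * q j * |r s i - r s j| := by
        refine (Finset.abs_sum_le_sum_abs _ _).trans (Finset.sum_le_sum fun i _ => ?_)
        refine (Finset.abs_sum_le_sum_abs _ _).trans (Finset.sum_le_sum fun j _ => ?_)
        rw [abs_mul, abs_of_nonneg (mul_nonneg (hp i) (hq j))]
      have hA : |1/Q * ∑ i, ∑ j, p i * q j * (r s i - r s j)|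
          ≤ 1/Q * ∑ i, ∑ j, p i * q j * |r s i - r s j| := by
        rw [abs_mul, abs_of_nonneg (by positivity : (0:ℝ) ≤ 1/Q)]
        exact mul_le_mul_of_nonneg_left hD (by positivity)
      have hE : |((Q-P)/Q) * ∑ j, r s j * q j| = ((Q-P)/Q) * ∑ j, r s j * q j :=
        abs_of_nonneg (mul_nonneg (div_nonneg (by linarith) hQ0)
          (Finset.sum_nonneg fun j _ => mul_nonneg (hr s j) (hq j)))
      linarith
    calc ∑ s, b s * |∑ v, r s v * (p v - q v)|
        ≤ ∑ s, b s * ((1/Q) * (∑ i, ∑ j, p i * q j * |r s i - r s j|)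
          + ((Q - P)/Q) * ∑ j, r s j * q j) := Finset.sum_le_sum fun s _ => perS s
      _ = (1/Q) * (∑ i, ∑ j, p i * q j * (∑ s, b s * |r s i - r s j|))
          + ((Q - P)/Q) * ∑ j, q j * (∑ s, b s * r s j) := by
          rw [Finset.sum_congr rfl (fun s _ => mul_add (b s) _ _), Finset.sum_add_distrib]
          congr 1
          · have : ∀ s, b s * ((1/Q) * (∑ i, ∑ j, p i * q j * |r s i - r s j|))
                = (1/Q) * (b s * ∑ i, ∑ j, p i * q j * |r s i - r s j|) := by
              intro s; ring
            rw [Finset.sum_congr rfl fun s _ => this s, ← Finset.mul_sum,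
              swap_helper b p q (fun s i j => |r s i - r s j|)]
          · have : ∀ s, b s * (((Q - P)/Q) * ∑ j, r s j * q j)
                = ((Q - P)/Q) * (b s * ∑ j, r s j * q j) := by intro s; ring
            rw [Finset.sum_congr rfl fun s _ => this s, ← Finset.mul_sum]
            congr 1
            simp only [Finset.mul_sum]
            rw [Finset.sum_comm]
            refine Finset.sum_congr rfl fun j _ => ?_
            refine Finset.sum_congr rfl fun s _ => by ring
      _ ≤ (1/Q) * (∑ i, ∑ j, p i * q j * (a i + a j))
          + ((Q - P)/Q) * ∑ j, q j * (a j + a') := by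
          apply add_le_add
          · apply mul_le_mul_of_nonneg_left _ (by positivity : (0:ℝ) ≤ 1/Q)
            refine Finset.sum_le_sum fun i _ => Finset.sum_le_sum fun j _ => ?_
            rcases eq_or_ne i j with rfl | hij
            · simp [hpq i]
            · exact mul_le_mul_of_nonneg_left (h2 i j hij) (mul_nonneg (hp i) (hq j))
          · apply mul_le_mul_of_nonneg_left _ (div_nonneg (by linarith) hQ0)
            refine Finset.sum_le_sum fun j _ => ?_
            rw [← h1 j]
      _ = ∑ v, a v * (p v + q v) + a' * (Q - P) := by
          have e2 : ∑ i, ∑ j, p i * q j * (a i + a j)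
              = (∑ i, a i * p i) * Q + P * (∑ j, a j * q j) := by
            have : ∀ i, ∑ j, p i * q j * (a i + a j)
                = a i * p i * Q + p i * (∑ j, a j * q j) := by
              intro i
              rw [Finset.mul_sum, Finset.mul_sum, ← Finset.sum_add_distrib]
              congr 1; ext j; ring
            rw [Finset.sum_congr rfl (fun i _ => this i), Finset.sum_add_distrib,
              ← Finset.sum_mul, ← Finset.sum_mul]
          have e3 : ∑ j, q j * (a j + a') = (∑ j, a j * q j) + a' * Q := by
            rw [Finset.mul_sum, ← Finset.sum_add_distrib]
            exact Finset.sum_congr rfl fun j _ => by ring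
          have e4 : ∑ v, a v * (p v + q v) = (∑ i, a i * p i) + (∑ j, a j * q j) := by
            rw [← Finset.sum_add_distrib]; congr 1; ext v; ring
          rw [e2, e3, e4]
          field_simp
          ring

lemma abs_bound' {n : ℕ} {S : Type} [Fintype S]
    (a : Fin n → ℝ) (a' : ℝ) (r : S → Fin n → ℝ) (b : S → ℝ)
    (ha : ∀ i, 0 ≤ a i) (ha' : 0 ≤ a')
    (hr : ∀ s i, 0 ≤ r s i) (hb : ∀ s, 0 ≤ b s)
    (h1 : ∀ i, a i + a' = ∑ s, b s * r s i)
    (h2 : ∀ i j, i ≠ j → ∑ s, b s * |r s i - r s j| ≤ a i + a j)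
    (g : Fin n → ℝ) :
    ∑ s, b s * |∑ v, r s v * g v| ≤ ∑ v, a v * |g v| + a' * |∑ v, g v| := by
  set p : Fin n → ℝ := fun v => max (g v) 0 with hpdef
  set q : Fin n → ℝ := fun v => max (-g v) 0 with hqdef
  have hp : ∀ i, 0 ≤ p i := fun i => le_max_right _ _
  have hq : ∀ i, 0 ≤ q i := fun i => le_max_right _ _
  have hsub : ∀ v, p v - q v = g v := by
    intro v
    rcases le_total (g v) 0 with h | h
    · simp [hpdef, hqdef, max_eq_right h, max_eq_left (neg_nonneg.2 h)]
    · simp [hpdef, hqdef, max_eq_left h, max_eq_right (neg_nonpos.2 h)]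
  have habs : ∀ v, p v + q v = |g v| := by
    intro v
    rcases le_total (g v) 0 with h | h
    · simp [hpdef, hqdef, abs_of_nonpos h, max_eq_right h, neg_nonneg.2 h]
    · simp [hpdef, hqdef, abs_of_nonneg h, max_eq_left h, neg_nonpos.2 h]
  have hpq : ∀ v, p v * q v = 0 := by
    intro v
    rcases le_total (g v) 0 with h | h
    · simp [hpdef, max_eq_right h]
    · simp [hqdef, max_eq_right (neg_nonpos.2 h)]
  have hgsum : ∑ v, g v = ∑ v, p v - ∑ v, q v := by
    rw [← Finset.sum_sub_distrib]
    exact (Finset.sum_congr rfl fun v _ => (hsub v).symm)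
  rcases le_total (∑ i, p i) (∑ i, q i) with hle | hle
  · have := abs_bound a p q a' r b ha ha' hp hq hpq hr hb h1 h2 hle
    calc ∑ s, b s * |∑ v, r s v * g v|
        = ∑ s, b s * |∑ v, r s v * (p v - q v)| := by
          refine Finset.sum_congr rfl fun s _ => ?_
          congr 2
          exact Finset.sum_congr rfl fun v _ => by rw [hsub v]
      _ ≤ ∑ v, a v * (p v + q v) + a' * (∑ v, q v - ∑ v, p v) := this
      _ = ∑ v, a v * |g v| + a' * |∑ v, g v| := by
          rw [hgsum, abs_of_nonpos (by linarith), neg_sub]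
          congr 1
          exact Finset.sum_congr rfl fun v _ => by rw [habs v]
  · have := abs_bound a q p a' r b ha ha' hq hp
      (fun v => by rw [mul_comm]; exact hpq v) hr hb h1 h2 hle
    calc ∑ s, b s * |∑ v, r s v * g v|
        = ∑ s, b s * |∑ v, r s v * (q v - p v)| := by
          refine Finset.sum_congr rfl fun s _ => ?_
          rw [show ∑ v, r s v * (q v - p v) = -∑ v, r s v * g v by
            rw [← Finset.sum_neg_distrib]
            exact Finset.sum_congr rfl fun v _ => by rw [← hsub v]; ring]
          rw [abs_neg]
      _ ≤ ∑ v, a v * (q v + p v) + a' * (∑ v, p v - ∑ v, q v) := this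
      _ = ∑ v, a v * |g v| + a' * |∑ v, g v| := by
          rw [hgsum, abs_of_nonneg (by linarith)]
          congr 1
          refine Finset.sum_congr rfl fun v _ => by rw [← habs v]; ring


lemma stepA {ι : Type} [Fintype ι] (α y : ι → ℝ) (I : Set ℝ) (f : ℝ → ℝ)
    (hf : ConvexOn ℝ I f) (hy : ∀ k, y k ∈ I)
    (h0 : ∑ k, α k = 0) (h1 : ∑ k, α k * y k = 0)
    (H : ∀ t : ℝ, 0 ≤ ∑ k, α k * max (y k - t) 0) :
    0 ≤ ∑ k, α k * f (y k) := by
  rcases isEmpty_or_nonempty ι with hemp | hne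
  · simp
  set V : Finset ℝ := Finset.image y Finset.univ with hV
  have hVne : V.Nonempty := (Finset.univ_nonempty).image y
  set m : ℕ := V.card with hm
  have hm1 : 1 ≤ m := Finset.card_pos.2 hVne
  set e : Fin m ≃o V := V.orderIsoOfFin rfl with he
  have hZwd : ∀ j : ℕ, min j (m - 1) < m := fun j => by omega
  set Z : ℕ → ℝ := fun j => ((e ⟨min j (m - 1), hZwd j⟩ : V) : ℝ) with hZ
  have hZmono : Monotone Z := by
    intro j j' hjj
    exact_mod_cast (e.monotone (by simp [Fin.mk_le_mk]; omega))
  have hZstrict : ∀ j j' : ℕ, j < j' → j' ≤ m - 1 → Z j < Z j' := by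
    intro j j' hlt hle
    exact_mod_cast (e.strictMono (by simp [Fin.mk_lt_mk]; omega))
  have hZmemV : ∀ j, Z j ∈ V := fun j => (e ⟨min j (m - 1), hZwd j⟩).2
  have hZmem : ∀ j, Z j ∈ I := by
    intro j
    rcases Finset.mem_image.1 (hZmemV j) with ⟨k, _, hk⟩
    rw [← hk]; exact hy k
  -- index of each point
  have hyV : ∀ k, y k ∈ V := fun k => Finset.mem_image_of_mem y (mem_univ k)
  set idx : ι → ℕ := fun k => ((e.symm ⟨y k, hyV k⟩ : Fin m) : ℕ) with hidx
  have hidxle : ∀ k, idx k ≤ m - 1 := by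
    intro k
    have h := (e.symm ⟨y k, hyV k⟩).isLt
    simp only [hidx]
    omega
  have hZidx : ∀ k, Z (idx k) = y k := by
    intro k
    have h1' : (⟨min (idx k) (m - 1), hZwd _⟩ : Fin m) = e.symm ⟨y k, hyV k⟩ := by
      apply Fin.ext; simp [hidx]; omega
    simp only [hZ, h1']
    rw [OrderIso.apply_symm_apply]
  set d : ℕ → ℝ := fun j => (f (Z (j + 1)) - f (Z j)) / (Z (j + 1) - Z j) with hd
  have hdmono : ∀ j : ℕ, 1 ≤ j → j + 1 ≤ m - 1 → d (j - 1) ≤ d j := by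
    intro j hj1 hjm
    have h01 : Z (j - 1) < Z j := hZstrict _ _ (by omega) (by omega)
    have h12 : Z j < Z (j + 1) := hZstrict _ _ (by omega) (by omega)
    have := hf.slope_mono_adjacent (hZmem (j - 1)) (hZmem (j + 1)) h01 h12
    simpa [hd, show j - 1 + 1 = j by omega] using this
  -- main telescoping identity
  have main : ∀ a : ℕ, a ≤ m - 1 →
      f (Z a) = f (Z 0) + d 0 * (Z a - Z 0)
        + ∑ j ∈ Ico 1 a, (d j - d (j - 1)) * (Z a - Z j) := by
    intro a
    induction a with
    | zero => intro _; simp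
    | succ a iha =>
      intro hle
      have haa : a ≤ m - 1 := by omega
      have hstep : f (Z (a + 1)) = f (Z a) + d a * (Z (a + 1) - Z a) := by
        have hlt : Z a < Z (a + 1) := hZstrict _ _ (by omega) hle
        have : d a * (Z (a + 1) - Z a) = f (Z (a + 1)) - f (Z a) :=
          div_mul_cancel₀ _ (sub_ne_zero.2 hlt.ne')
        linarith
      rcases Nat.eq_zero_or_pos a with rfl | hapos
      · simpa [Finset.Ico_self] using hstep
      · have tel : ∑ j ∈ Ico 1 a, (d j - d (j - 1)) = d (a - 1) - d 0 := by
          rw [Finset.sum_Ico_eq_sum_range]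
          have : ∀ i ∈ Finset.range (a - 1), d (1 + i) - d (1 + i - 1) = d (i + 1) - d i := by
            intro i _
            congr 2 <;> omega
          rw [Finset.sum_congr rfl this, Finset.sum_range_sub d]
        have expand : ∑ j ∈ Ico 1 (a + 1), (d j - d (j - 1)) * (Z (a + 1) - Z j)
            = (∑ j ∈ Ico 1 a, (d j - d (j - 1)) * (Z a - Z j))
              + (d (a - 1) - d 0) * (Z (a + 1) - Z a)
              + (d a - d (a - 1)) * (Z (a + 1) - Z a) := by
          rw [Finset.sum_Ico_succ_top (by omega : 1 ≤ a)]
          have h' : ∀ j ∈ Ico 1 a, (d j - d (j - 1)) * (Z (a + 1) - Z j)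
              = (d j - d (j - 1)) * (Z a - Z j)
                + (d j - d (j - 1)) * (Z (a + 1) - Z a) := fun j _ => by ring
          rw [Finset.sum_congr rfl h', Finset.sum_add_distrib, ← Finset.sum_mul, tel]
          try ring
        rw [hstep, iha haa, expand]
        ring
  -- extended identity with max
  have ext : ∀ a : ℕ, a ≤ m - 1 →
      f (Z a) = f (Z 0) + d 0 * (Z a - Z 0)
        + ∑ j ∈ Ico 1 (m - 1), (d j - d (j - 1)) * max (Z a - Z j) 0 := by
    intro a ha
    rw [main a ha]
    congr 1
    have filt : ∀ j ∈ Ico 1 (m - 1), (d j - d (j - 1)) * max (Z a - Z j) 0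
        = if j < a then (d j - d (j - 1)) * (Z a - Z j) else 0 := by
      intro j hj
      rcases Finset.mem_Ico.1 hj with ⟨hj1, hj2⟩
      by_cases hja : j < a
      · rw [if_pos hja, max_eq_left (sub_nonneg.2 (hZmono (le_of_lt hja)))]
      · rw [if_neg hja, max_eq_right (sub_nonpos.2 (hZmono (not_lt.1 hja))), mul_zero]
    rw [Finset.sum_congr rfl filt, ← Finset.sum_filter, Finset.Ico_filter_lt,
      min_eq_right (by omega : a ≤ m - 1)]
  -- per point identity
  have perk : ∀ k, f (y k) = f (Z 0) + d 0 * (y k - Z 0)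
      + ∑ j ∈ Ico 1 (m - 1), (d j - d (j - 1)) * max (y k - Z j) 0 := by
    intro k
    rw [← hZidx k]
    exact ext (idx k) (hidxle k)
  -- assemble
  calc (0:ℝ) ≤ ∑ j ∈ Ico 1 (m - 1), (d j - d (j - 1))
        * (∑ k, α k * max (y k - Z j) 0) := by
        refine Finset.sum_nonneg fun j hj => ?_
        rcases Finset.mem_Ico.1 hj with ⟨hj1, hj2⟩
        have : 0 ≤ d j - d (j - 1) := sub_nonneg.2 (hdmono j hj1 (by omega))
        exact mul_nonneg this (H (Z j))
    _ = ∑ k, α k * f (y k) := by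
        rw [Finset.sum_congr rfl fun k (_ : k ∈ univ) => congrArg (α k * ·) (perk k)]
        simp only [mul_add, Finset.sum_add_distrib]
        have p1 : ∑ k, α k * f (Z 0) = 0 := by rw [← Finset.sum_mul, h0, zero_mul]
        have p2 : ∑ k, α k * (d 0 * (y k - Z 0)) = 0 := by
          have : ∀ k : ι, α k * (d 0 * (y k - Z 0))
              = d 0 * (α k * y k) - (d 0 * Z 0) * α k := fun k => by ring
          rw [Finset.sum_congr rfl fun k _ => this k, Finset.sum_sub_distrib,
            ← Finset.mul_sum, ← Finset.mul_sum, h0, h1, mul_zero, mul_zero, sub_zero]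
        have p3 : ∑ k, α k * ∑ j ∈ Ico 1 (m - 1), (d j - d (j - 1)) * max (y k - Z j) 0
            = ∑ j ∈ Ico 1 (m - 1), (d j - d (j - 1)) * (∑ k, α k * max (y k - Z j) 0) := by
          simp only [Finset.mul_sum]
          rw [Finset.sum_comm]
          refine Finset.sum_congr rfl fun j _ => Finset.sum_congr rfl fun k _ => by ring
        rw [p1, p2, p3]
        ring

theorem popoviciu_master (n : ℕ)
    (a : Fin n → ℝ) (ha : ∀ i, 0 ≤ a i) (a' : ℝ) (ha' : 0 ≤ a')
    (S : Type) [Fintype S] (r : S → Fin n → ℝ) (hr : ∀ s i, 0 ≤ r s i)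
    (b : S → ℝ) (hb : ∀ s, 0 ≤ b s)
    (h1 : ∀ i : Fin n, a i + a' = ∑ s, b s * r s i)
    (h2 : ∀ i j : Fin n, i ≠ j → a i + a j ≥ ∑ s, b s * |r s i - r s j|)
    (I : Set ℝ) (f : ℝ → ℝ) (hf : ConvexOn ℝ I f)
    (w : Fin n → ℝ) (hw : ∀ i, 0 ≤ w i)
    (hwsum : ∑ v, w v ≠ 0) (hrw : ∀ s, ∑ v, r s v * w v ≠ 0)
    (x : Fin n → ℝ) (hx : ∀ i, x i ∈ I) :
    (∑ i, a i * w i * f (x i)) +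
      a' * (∑ v, w v) * f ((∑ v, w v * x v) / (∑ v, w v)) ≥
    ∑ s, b s * (∑ v, r s v * w v) *
      f ((∑ v, r s v * w v * x v) / (∑ v, r s v * w v)) := by
  set W : ℝ := ∑ v, w v with hW
  set ρ : S → ℝ := fun s => ∑ v, r s v * w v with hρ
  have hWpos : 0 < W := lt_of_le_of_ne (Finset.sum_nonneg fun v _ => hw v) (Ne.symm hwsum)
  have hρpos : ∀ s, 0 < ρ s := fun s =>
    lt_of_le_of_ne (Finset.sum_nonneg fun v _ => mul_nonneg (hr s v) (hw v)) (Ne.symm (hrw s))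
  set z0 : ℝ := (∑ v, w v * x v) / W with hz0def
  set ys : S → ℝ := fun s => (∑ v, r s v * w v * x v) / ρ s with hysdef
  have hz0 : z0 ∈ I := by
    have h := hf.1.centerMass_mem (t := Finset.univ) (fun i _ => hw i)
      (by rw [← hW]; exact hWpos) (fun i _ => hx i)
    have e : z0 = (∑ i, w i)⁻¹ * ∑ i, w i * x i := by
      rw [hz0def, div_eq_inv_mul, hW]
    rw [e]
    simpa [Finset.centerMass, smul_eq_mul] using h
  have hys : ∀ s, ys s ∈ I := by
    intro s
    have h := hf.1.centerMass_mem (t := Finset.univ) (w := fun v => r s v * w v)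
      (fun i _ => mul_nonneg (hr s i) (hw i))
      (by rw [show ∑ i, r s i * w i = ρ s from rfl]; exact hρpos s)
      (fun i _ => hx i)
    have e : ys s = (∑ i, r s i * w i)⁻¹ * ∑ i, r s i * w i * x i := by
      simp only [hysdef, hρ]
      rw [div_eq_inv_mul]
    rw [e]
    simpa [Finset.centerMass, smul_eq_mul, mul_assoc] using h
  -- swap lemma
  have hswap : ∀ u : Fin n → ℝ, ∑ s, b s * ∑ v, r s v * u v = ∑ v, (a v + a') * u v := by
    intro u
    simp only [Finset.mul_sum]
    rw [Finset.sum_comm]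
    refine Finset.sum_congr rfl fun v _ => ?_
    rw [h1 v, Finset.sum_mul]
    exact Finset.sum_congr rfl fun s _ => by ring
  set ι : Type := Fin n ⊕ (Unit ⊕ S) with hι
  set α : ι → ℝ := fun k => Sum.rec (fun i => a i * w i)
    (fun k' => Sum.rec (fun _ => a' * W) (fun s => -(b s * ρ s)) k') k with hα
  set Y : ι → ℝ := fun k => Sum.rec (fun i => x i)
    (fun k' => Sum.rec (fun _ => z0) (fun s => ys s) k') k with hY
  have hsum3 : ∀ F : ι → ℝ, ∑ k, F k
      = ∑ i, F (Sum.inl i) + (F (Sum.inr (Sum.inl ())) + ∑ s, F (Sum.inr (Sum.inr s))) := by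
    intro F
    rw [Fintype.sum_sum_type, Fintype.sum_sum_type]
    simp
  have hmem : ∀ k, Y k ∈ I := by
    rintro (i | u | s)
    · exact hx i
    · exact hz0
    · exact hys s
  have hsum0 : ∑ k, α k = 0 := by
    rw [hsum3]
    have := hswap w
    simp only [hα]
    have e1 : ∑ s, b s * ρ s = ∑ v, (a v + a') * w v := hswap w
    have e2 : ∑ v, (a v + a') * w v = ∑ v, a v * w v + a' * W := by
      rw [hW, Finset.mul_sum, ← Finset.sum_add_distrib]
      exact Finset.sum_congr rfl fun v _ => by ring
    rw [Finset.sum_neg_distrib, e1, e2]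
    ring
  have hρys : ∀ s, ρ s * ys s = ∑ v, r s v * w v * x v := by
    intro s
    simp only [hysdef]
    rw [mul_comm]
    exact div_mul_cancel₀ _ (ne_of_gt (hρpos s))
  have hWz0 : W * z0 = ∑ v, w v * x v := by
    rw [hz0def, mul_comm]
    exact div_mul_cancel₀ _ (ne_of_gt hWpos)
  have hsum1 : ∑ k, α k * Y k = 0 := by
    rw [hsum3]
    show ∑ i, (a i * w i) * x i + ((a' * W) * z0 + ∑ s, (-(b s * ρ s)) * ys s) = 0
    have e1 : ∑ s, (-(b s * ρ s)) * ys s = -(∑ v, (a v + a') * (w v * x v)) := by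
      rw [← hswap (fun v => w v * x v), ← Finset.sum_neg_distrib]
      refine Finset.sum_congr rfl fun s _ => ?_
      have e : ∑ v, r s v * (w v * x v) = ∑ v, r s v * w v * x v :=
        Finset.sum_congr rfl fun v _ => by ring
      rw [e, ← hρys s]; ring
    rw [e1]
    have e2 : (a' * W) * z0 = a' * ∑ v, w v * x v := by
      rw [mul_assoc, hWz0]
    rw [e2]
    have e4 : ∑ v, (a v + a') * (w v * x v)
        = ∑ v, a v * w v * x v + a' * ∑ v, w v * x v := by
      rw [Finset.mul_sum, ← Finset.sum_add_distrib]
      exact Finset.sum_congr rfl fun v _ => by ring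
    rw [e4]
    have e5 : ∑ i, (a i * w i) * x i = ∑ v, a v * w v * x v :=
      Finset.sum_congr rfl fun v _ => by ring
    rw [e5]
    ring
  have maxhalf : ∀ u : ℝ, max u 0 = (u + |u|) / 2 := by
    intro u
    rcases le_total u 0 with h | h
    · rw [max_eq_right h, abs_of_nonpos h]; ring
    · rw [max_eq_left h, abs_of_nonneg h]; ring
  have H : ∀ t : ℝ, 0 ≤ ∑ k, α k * max (Y k - t) 0 := by
    intro t
    have habs : 0 ≤ ∑ i, (a i * w i) * |x i - t|
        + ((a' * W) * |z0 - t| + ∑ s, (-(b s * ρ s)) * |ys s - t|) := by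
      have hg := abs_bound' a a' r b ha ha' hr hb h1
        (fun i j hij => h2 i j hij) (fun v => w v * (x v - t))
      have p1 : ∑ v, a v * |w v * (x v - t)| = ∑ v, (a v * w v) * |x v - t| := by
        refine Finset.sum_congr rfl fun v _ => ?_
        rw [abs_mul, abs_of_nonneg (hw v)]; ring
      have p2 : |∑ v, w v * (x v - t)| = W * |z0 - t| := by
        have e : ∑ v, w v * (x v - t) = W * (z0 - t) := by
          rw [mul_sub, hWz0]
          rw [Finset.sum_congr rfl fun v (_ : v ∈ univ) => mul_sub (w v) (x v) t,
            Finset.sum_sub_distrib]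
          congr 1
          rw [← Finset.sum_mul, mul_comm]
        rw [e, abs_mul, abs_of_nonneg hWpos.le]
      have p3 : ∑ s, b s * |∑ v, r s v * (w v * (x v - t))|
          = ∑ s, b s * (ρ s * |ys s - t|) := by
        refine Finset.sum_congr rfl fun s _ => ?_
        congr 1
        have e : ∑ v, r s v * (w v * (x v - t)) = ρ s * (ys s - t) := by
          rw [mul_sub, hρys s]
          rw [Finset.sum_congr rfl fun v (_ : v ∈ univ) =>
            show r s v * (w v * (x v - t)) = r s v * w v * x v - r s v * w v * t by ring,
            Finset.sum_sub_distrib]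
          congr 1
          rw [← Finset.sum_mul, mul_comm]
        rw [e, abs_mul, abs_of_nonneg (hρpos s).le]
      rw [p1, p2, p3] at hg
      have e' : ∑ s, (-(b s * ρ s)) * |ys s - t| = -∑ s, b s * (ρ s * |ys s - t|) := by
        rw [← Finset.sum_neg_distrib]
        exact Finset.sum_congr rfl fun s _ => by ring
      rw [e']
      linarith
    have habs' : 0 ≤ ∑ k, α k * |Y k - t| := by
      rw [hsum3]
      exact habs
    have hlin : ∑ k, α k * (Y k - t) = 0 := by
      rw [Finset.sum_congr rfl fun k (_ : k ∈ univ) =>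
        show α k * (Y k - t) = α k * Y k - t * α k by ring, Finset.sum_sub_distrib,
        hsum1, ← Finset.mul_sum, hsum0]
      ring
    rw [Finset.sum_congr rfl fun k (_ : k ∈ univ) =>
      show α k * max (Y k - t) 0 = (α k * (Y k - t) + α k * |Y k - t|) / 2 by
        rw [maxhalf (Y k - t)]; ring,
      ← Finset.sum_div, Finset.sum_add_distrib, hlin]
    linarith
  have key := stepA α Y I f hf hmem hsum0 hsum1 H
  rw [hsum3] at key
  have key' : 0 ≤ ∑ i, (a i * w i) * f (x i)
      + ((a' * W) * f z0 + ∑ s, (-(b s * ρ s)) * f (ys s)) := key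
  have hge : ∑ s, b s * (∑ v, r s v * w v) *
      f ((∑ v, r s v * w v * x v) / (∑ v, r s v * w v)) = ∑ s, b s * ρ s * f (ys s) := by
    refine Finset.sum_congr rfl fun s _ => ?_
    simp only [hρ, hysdef]
  rw [ge_iff_le, hge]
  have e'' : ∑ s, (-(b s * ρ s)) * f (ys s) = -∑ s, b s * ρ s * f (ys s) := by
    rw [← Finset.sum_neg_distrib]
    exact Finset.sum_congr rfl fun s _ => by ring
  rw [e''] at key'
  have e3 : ∑ i, (a i * w i) * f (x i) = ∑ i, a i * w i * f (x i) :=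
    Finset.sum_congr rfl fun i _ => by ring
  rw [e3] at key'
  linarith
end

section
/- Let n ≥ 0, let w₁, ..., wₙ be positive reals, let a₁, ..., aₙ and a be nonnegative reals, let S be a finite set, and for each s ∈ S let r_{s,1}, ..., r_{s,n} ≥ 0 and b_s ≥ 0. Let I ⊆ ℝ be a nontrivial interval. Assume the inequality ∑_{i=1}^n aᵢ·wᵢ·f(xᵢ) + a·(∑_v w_v)·f((∑_v w_v·x_v)/(∑_v w_v)) ≥ ∑_{s∈S} b_s·(∑_v r_{s,v}·w_v)·f((∑_v r_{s,v}·w_v·x_v)/(∑_v r_{s,v}·w_v)) holds for every convex function f : I → ℝ and all points x₁, ..., xₙ ∈ I. Then aᵢ + a = ∑_{s∈S} b_s·r_{s,i} for every i ∈ {1,...,n}, and aᵢ + aⱼ ≥ ∑_{s∈S} b_s·|r_{s,i} − r_{s,j}| for any two distinct i, j ∈ {1,...,n}. -/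
theorem popoviciu_master_converse (n : ℕ)
    (w : Fin n → ℝ) (hw : ∀ i, 0 < w i)
    (a : Fin n → ℝ) (ha : ∀ i, 0 ≤ a i) (a' : ℝ) (ha' : 0 ≤ a')
    (S : Type) [Fintype S] (r : S → Fin n → ℝ) (hr : ∀ s i, 0 ≤ r s i)
    (b : S → ℝ) (hb : ∀ s, 0 ≤ b s)
    (I : Set ℝ) (hI : Convex ℝ I) (hne : ∃ p ∈ I, ∃ q ∈ I, p < q)
    (hrw : ∀ s, ∑ v, r s v * w v ≠ 0)
    (hineq : ∀ f : ℝ → ℝ, ConvexOn ℝ I f → ∀ x : Fin n → ℝ, (∀ i, x i ∈ I) →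
      (∑ i, a i * w i * f (x i)) +
        a' * (∑ v, w v) * f ((∑ v, w v * x v) / (∑ v, w v)) ≥
      ∑ s, b s * (∑ v, r s v * w v) *
        f ((∑ v, r s v * w v * x v) / (∑ v, r s v * w v))) :
    (∀ i : Fin n, a i + a' = ∑ s, b s * r s i) ∧
      (∀ i j : Fin n, i ≠ j → a i + a j ≥ ∑ s, b s * |r s i - r s j|) := by
  obtain ⟨p, hp, q, hq, hpq⟩ := hne
  have hIcc : Set.Icc p q ⊆ I := hI.ordConnected.out hp hq
  have hR : ∀ s, 0 < ∑ v, r s v * w v := by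
    intro s
    rcases (Finset.sum_nonneg fun v _ => mul_nonneg (hr s v) (hw v).le).lt_or_eq with h | h
    · exact h
    · exact absurd h.symm (hrw s)
  have hid : ConvexOn ℝ I (fun t => t) :=
    ⟨hI, fun x _ y _ α β _ _ _ => le_rfl⟩
  have hneg : ConvexOn ℝ I (fun t => -t) :=
    ⟨hI, fun x _ y _ α β _ _ _ => by
      simp only [smul_eq_mul]
      exact le_of_eq (by ring)⟩
  -- the linear identity
  have lin : (∑ v, w v) ≠ 0 → ∀ x : Fin n → ℝ, (∀ k, x k ∈ I) →
      ∑ k, (a k + a' - ∑ s, b s * r s k) * (w k * x k) = 0 := by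
    intro hW x hx
    have h1 := hineq (fun t => t) hid x hx
    have h2 := hineq (fun t => -t) hneg x hx
    simp only [ge_iff_le, mul_neg, Finset.sum_neg_distrib] at h1 h2
    have e1 : a' * (∑ v, w v) * ((∑ v, w v * x v) / (∑ v, w v))
        = a' * ∑ v, w v * x v := by
      field_simp
    have e2 : ∀ s, b s * (∑ v, r s v * w v) *
        ((∑ v, r s v * w v * x v) / (∑ v, r s v * w v))
        = b s * ∑ v, r s v * w v * x v := by
      intro s
      field_simp [hrw s]
    rw [e1, Finset.sum_congr rfl fun s _ => e2 s] at h1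
    rw [e1, Finset.sum_congr rfl fun s _ => e2 s] at h2
    have heq : (∑ i, a i * w i * x i) + a' * (∑ v, w v * x v)
        = ∑ s, b s * ∑ v, r s v * w v * x v := by linarith
    have swap : ∑ s, b s * ∑ v, r s v * w v * x v
        = ∑ k, (∑ s, b s * r s k) * (w k * x k) := by
      simp only [Finset.mul_sum, Finset.sum_mul]
      rw [Finset.sum_comm]
      exact Finset.sum_congr rfl fun k _ => Finset.sum_congr rfl fun s _ => by ring
    have expand : ∑ k, (a k + a' - ∑ s, b s * r s k) * (w k * x k)
        = ((∑ k, a k * w k * x k) + a' * (∑ v, w v * x v))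
          - ∑ k, (∑ s, b s * r s k) * (w k * x k) := by
      rw [Finset.mul_sum, ← Finset.sum_add_distrib, ← Finset.sum_sub_distrib]
      exact Finset.sum_congr rfl fun k _ => by ring
    rw [expand, heq, swap, sub_self]
  constructor
  · -- first part
    intro i
    have hW : (0:ℝ) < ∑ v, w v :=
      Finset.sum_pos (fun v _ => hw v) ⟨i, Finset.mem_univ i⟩
    have hx2 : ∀ k, (fun k => if k = i then q else p) k ∈ I := by
      intro k
      by_cases h : k = i
      · simp only [h, if_pos rfl]; exact hq
      · simp only [if_neg h]; exact hp
    have E1 := lin hW.ne' (fun _ => p) (fun _ => hp)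
    have E2 := lin hW.ne' (fun k => if k = i then q else p) hx2
    have hsplit : ∑ k, (a k + a' - ∑ s, b s * r s k) *
          (w k * (if k = i then q else p))
        = (∑ k, (a k + a' - ∑ s, b s * r s k) * (w k * p))
          + (a i + a' - ∑ s, b s * r s i) * (w i * (q - p)) := by
      have key : ∀ k, (a k + a' - ∑ s, b s * r s k) * (w k * (if k = i then q else p))
          = (a k + a' - ∑ s, b s * r s k) * (w k * p)
            + (if k = i then (a i + a' - ∑ s, b s * r s i) * (w i * (q - p)) else 0) := by
        intro k
        by_cases h : k = i
        · subst h; rw [if_pos rfl, if_pos rfl]; ring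
        · rw [if_neg h, if_neg h]; ring
      rw [Finset.sum_congr rfl fun k _ => key k, Finset.sum_add_distrib,
        Finset.sum_ite_eq' Finset.univ i, if_pos (Finset.mem_univ i)]
    rw [hsplit, E1, zero_add] at E2
    have hpos : (0:ℝ) < w i * (q - p) := mul_pos (hw i) (sub_pos.mpr hpq)
    rcases mul_eq_zero.mp E2 with h | h
    · linarith
    · exact absurd h hpos.ne'
  · -- second part
    intro i j hij
    have hW : (0:ℝ) < ∑ v, w v :=
      Finset.sum_pos (fun v _ => hw v) ⟨i, Finset.mem_univ i⟩
    set c : ℝ := (p + q) / 2 with hc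
    set ε : ℝ := (q - p) / 2 * min (w i) (w j) with he
    have hε : (0:ℝ) < ε := mul_pos (by linarith) (lt_min (hw i) (hw j))
    have hεi : ε / w i ≤ (q - p) / 2 := by
      rw [div_le_iff₀ (hw i), he]
      exact mul_le_mul_of_nonneg_left (min_le_left _ _) (by linarith)
    have hεj : ε / w j ≤ (q - p) / 2 := by
      rw [div_le_iff₀ (hw j), he]
      exact mul_le_mul_of_nonneg_left (min_le_right _ _) (by linarith)
    have hεi0 : (0:ℝ) ≤ ε / w i := div_nonneg hε.le (hw i).le
    have hεj0 : (0:ℝ) ≤ ε / w j := div_nonneg hε.le (hw j).le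
    set f : ℝ → ℝ := fun t => |t - c| with hf
    have hconv : ConvexOn ℝ I f := by
      refine ⟨hI, fun x _ y _ α β hα hβ hab => ?_⟩
      simp only [hf, smul_eq_mul]
      calc |α * x + β * y - c| = |α * (x - c) + β * (y - c)| := by
              rw [show α * x + β * y - c = α * (x - c) + β * (y - c) by
                linear_combination c * hab]
        _ ≤ |α * (x - c)| + |β * (y - c)| := abs_add_le _ _
        _ = α * |x - c| + β * |y - c| := by
              rw [abs_mul, abs_mul, abs_of_nonneg hα, abs_of_nonneg hβ]
    set x3 : Fin n → ℝ := fun k =>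
      if k = i then c + ε / w i else if k = j then c - ε / w j else c with hx3
    have hx3I : ∀ k, x3 k ∈ I := by
      intro k
      apply hIcc
      simp only [hx3, Set.mem_Icc]
      by_cases h1 : k = i
      · rw [if_pos h1]
        exact ⟨by linarith, by linarith⟩
      · rw [if_neg h1]
        by_cases h2 : k = j
        · rw [if_pos h2]
          exact ⟨by linarith, by linarith⟩
        · rw [if_neg h2]
          exact ⟨by linarith, by linarith⟩
    have hji : ¬ (j = i) := fun e => hij e.symm
    have H := hineq f hconv x3 hx3I
    -- compute the left sum
    have hA : ∑ k, a k * w k * f (x3 k) = ε * a i + ε * a j := by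
      have key : ∀ k, a k * w k * f (x3 k)
          = (if k = i then ε * a i else 0) + (if k = j then ε * a j else 0) := by
        intro k
        by_cases h1 : k = i
        · simp only [hx3, hf, h1, eq_self_iff_true, if_true, if_neg hij]
          rw [show c + ε / w i - c = ε / w i by ring, abs_of_nonneg hεi0, add_zero]
          field_simp [(hw i).ne']
        · by_cases h2 : k = j
          · simp only [hx3, hf, h2, if_neg hji, eq_self_iff_true, if_true]
            rw [show c - ε / w j - c = -(ε / w j) by ring, abs_neg,
              abs_of_nonneg hεj0, zero_add]
            field_simp [(hw j).ne']
          · simp only [hx3, hf, if_neg h1, if_neg h2, sub_self, abs_zero,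
              mul_zero, add_zero]
      rw [Finset.sum_congr rfl fun k _ => key k, Finset.sum_add_distrib,
        Finset.sum_ite_eq' Finset.univ i, Finset.sum_ite_eq' Finset.univ j,
        if_pos (Finset.mem_univ i), if_pos (Finset.mem_univ j)]
    -- compute the barycenter term
    have hT : ∑ v, w v * x3 v = (∑ v, w v) * c := by
      have key : ∀ v, w v * x3 v
          = w v * c + ((if v = i then ε else 0) + (if v = j then -ε else 0)) := by
        intro v
        by_cases h1 : v = i
        · simp only [hx3, h1, eq_self_iff_true, if_true, if_neg hij]
          field_simp [(hw i).ne']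
          ring
        · by_cases h2 : v = j
          · simp only [hx3, h2, if_neg hji, eq_self_iff_true, if_true]
            field_simp [(hw j).ne']
            ring
          · simp only [hx3, if_neg h1, if_neg h2]
            ring
      rw [Finset.sum_congr rfl fun v _ => key v, Finset.sum_add_distrib,
        Finset.sum_add_distrib, Finset.sum_ite_eq' Finset.univ i,
        Finset.sum_ite_eq' Finset.univ j, if_pos (Finset.mem_univ i),
        if_pos (Finset.mem_univ j), ← Finset.sum_mul]
      ring
    have hB : a' * (∑ v, w v) * f ((∑ v, w v * x3 v) / (∑ v, w v)) = 0 := by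
      rw [hT, mul_div_cancel_left₀ c hW.ne']
      simp only [hf, sub_self, abs_zero, mul_zero]
    -- compute the right side
    have hTs : ∀ s, ∑ v, r s v * w v * x3 v
        = (∑ v, r s v * w v) * c + ε * (r s i - r s j) := by
      intro s
      have key : ∀ v, r s v * w v * x3 v
          = r s v * w v * c + ((if v = i then ε * r s i else 0)
            + (if v = j then -(ε * r s j) else 0)) := by
        intro v
        by_cases h1 : v = i
        · simp only [hx3, h1, eq_self_iff_true, if_true, if_neg hij]
          field_simp [(hw i).ne']
          ring
        · by_cases h2 : v = j
          · simp only [hx3, h2, if_neg hji, eq_self_iff_true, if_true]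
            field_simp [(hw j).ne']
            ring
          · simp only [hx3, if_neg h1, if_neg h2]
            ring
      rw [Finset.sum_congr rfl fun v _ => key v, Finset.sum_add_distrib,
        Finset.sum_add_distrib, Finset.sum_ite_eq' Finset.univ i,
        Finset.sum_ite_eq' Finset.univ j, if_pos (Finset.mem_univ i),
        if_pos (Finset.mem_univ j), ← Finset.sum_mul]
      ring
    have hC : ∑ s, b s * (∑ v, r s v * w v) *
        f ((∑ v, r s v * w v * x3 v) / (∑ v, r s v * w v))
        = ε * ∑ s, b s * |r s i - r s j| := by
      rw [Finset.mul_sum]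
      refine Finset.sum_congr rfl fun s _ => ?_
      have h1 : ((∑ v, r s v * w v) * c + ε * (r s i - r s j)) / (∑ v, r s v * w v) - c
          = ε * (r s i - r s j) / (∑ v, r s v * w v) := by
        rw [add_div, mul_div_cancel_left₀ c (hrw s)]
        ring
      rw [hTs s]
      simp only [hf]
      rw [h1, abs_div, abs_mul, abs_of_pos hε, abs_of_pos (hR s)]
      field_simp [hrw s]
    rw [hA, hB, hC, add_zero] at H
    have h2 : ε * (∑ s, b s * |r s i - r s j|) ≤ ε * (a i + a j) := by linarith
    exact (mul_le_mul_iff_right₀ hε).mp h2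
end

section
/- Let f be convex on an interval I ⊆ ℝ, let n ≥ 2, x₁, ..., xₙ ∈ I with indices extended cyclically modulo n, let x = (x₁+...+xₙ)/n, and let r be an integer. Then 2·∑_{i=1}^n f(xᵢ) + n(n−2)·f(x) ≥ n·∑_{s=1}^n f(x + (x_s − x_{s+r})/n). -/
open Finset

private lemma max_add_le'' (X Y : ℝ) : max (X + Y) 0 ≤ max X 0 + max Y 0 :=
  max_le (add_le_add (le_max_left _ _) (le_max_left _ _))
    (add_nonneg (le_max_right _ _) (le_max_right _ _))

private lemma max_flip (a : ℝ) : max a 0 = a + max (-a) 0 := by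
  rcases le_total a 0 with h | h
  · rw [max_eq_right h, max_eq_left (by linarith)]; ring
  · rw [max_eq_left h, max_eq_right (by linarith)]; ring

private lemma shift1 (n : ℕ) (G : ℤ → ℝ) (hG : ∀ i : ℤ, G (i + n) = G i) :
    ∑ i ∈ Icc (1:ℤ) n, G (i + 1) = ∑ i ∈ Icc (1:ℤ) n, G i := by
  have hmap : ∑ i ∈ Icc (1:ℤ) n, G (i + 1) = ∑ j ∈ Icc (2:ℤ) ((n:ℤ)+1), G j := by
    rw [show (Icc (2:ℤ) ((n:ℤ)+1)) = (Icc (1:ℤ) n).image (· + 1) from by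
      rw [Finset.image_add_right_Icc]; norm_num]
    rw [Finset.sum_image (fun a _ b _ h => by omega)]
  have e1 : Icc (1:ℤ) ((n:ℤ)+1) = insert ((n:ℤ)+1) (Icc (1:ℤ) (n:ℤ)) := by
    ext j; simp only [Finset.mem_Icc, Finset.mem_insert]; omega
  have e2 : Icc (1:ℤ) ((n:ℤ)+1) = insert (1:ℤ) (Icc 2 ((n:ℤ)+1)) := by
    ext j; simp only [Finset.mem_Icc, Finset.mem_insert]; omega
  have h1 : ((n:ℤ)+1) ∉ Icc (1:ℤ) (n:ℤ) := by simp [Finset.mem_Icc]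
  have h2 : (1:ℤ) ∉ Icc (2:ℤ) ((n:ℤ)+1) := by simp [Finset.mem_Icc]
  have key : G ((n:ℤ)+1) + ∑ i ∈ Icc (1:ℤ) n, G i = G 1 + ∑ j ∈ Icc (2:ℤ) ((n:ℤ)+1), G j := by
    rw [← Finset.sum_insert h1, ← Finset.sum_insert h2, ← e1, ← e2]
  have hG1 : G ((n:ℤ)+1) = G 1 := by rw [show (n:ℤ)+1 = 1 + (n:ℤ) from by ring, hG]
  rw [hmap]
  linarith [key, hG1]

private lemma shift_sum (n : ℕ) (r : ℤ) : ∀ (G : ℤ → ℝ), (∀ i : ℤ, G (i + n) = G i) →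
    ∑ i ∈ Icc (1:ℤ) n, G (i + r) = ∑ i ∈ Icc (1:ℤ) n, G i := by
  induction r using Int.induction_on with
  | zero => simp
  | succ k ih =>
      intro G hG
      have h1 : ∀ i ∈ Icc (1:ℤ) n, G (i + (k+1)) = (fun j => G (j+1)) (i + k) := by
        intro i _; simp only []; rw [show i + ((k:ℤ)+1) = i + k + 1 from by ring]
      rw [Finset.sum_congr rfl h1, ih (fun j => G (j+1)) (fun i => by
        rw [show i + (n:ℤ) + 1 = (i+1) + (n:ℤ) from by ring, hG])]
      exact shift1 n G hG
  | pred k ih =>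
      intro G hG
      have h1 : ∀ i ∈ Icc (1:ℤ) n, G (i + (-(k:ℤ)-1)) = (fun j => G (j-1)) (i + (-k)) := by
        intro i _; simp only []; rw [show i + (-(k:ℤ)-1) = i + -(k:ℤ) - 1 from by ring]
      rw [Finset.sum_congr rfl h1, ih (fun j => G (j-1)) (fun i => by
        rw [show i + (n:ℤ) - 1 = (i-1) + (n:ℤ) from by ring, hG])]
      have := shift1 n (fun j => G (j-1)) (fun i => by
        rw [show i + (n:ℤ) - 1 = (i-1) + (n:ℤ) from by ring, hG])
      simp only [add_sub_cancel_right] at this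
      exact this.symm

private lemma karamata_signed {ι : Type*} (T : Finset ι) (w u : ι → ℝ)
    (S : Set ℝ) (g : ℝ → ℝ) (hg : ConvexOn ℝ S g)
    (hu : ∀ i ∈ T, u i ∈ S)
    (hmass : ∑ i ∈ T, w i = 0)
    (hmean : ∑ i ∈ T, w i * u i = 0)
    (hhinge : ∀ c : ℝ, 0 ≤ ∑ i ∈ T, w i * max (u i - c) 0) :
    0 ≤ ∑ i ∈ T, w i * g (u i) := by
  classical
  rcases T.eq_empty_or_nonempty with rfl | hT
  · simp
  set P : Finset ℝ := T.image u with hP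
  set L : List ℝ := P.sort (· ≤ ·) with hL
  set m : ℕ := L.length with hm
  have hmcard : m = P.card := Finset.length_sort _
  have hPne : P.Nonempty := hT.image u
  have hm1 : 1 ≤ m := by
    rw [hmcard]; exact Finset.card_pos.mpr hPne
  set c : ℕ → ℝ := fun j => L.getD j 0 with hc
  have hsortlt : L.Pairwise (· < ·) := (Finset.sortedLT_sort P).pairwise
  have hcg : ∀ (j : ℕ) (hj : j < m), c j = L[j] := fun j hj => List.getD_eq_getElem L 0 hj
  have cmono : ∀ {a b : ℕ}, a < b → b < m → c a < c b := by
    intro a b hab hbm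
    have := List.pairwise_iff_getElem.mp hsortlt a b (hab.trans hbm) hbm hab
    rw [hcg a (hab.trans hbm), hcg b hbm]
    exact this
  have cmono' : ∀ {a b : ℕ}, a ≤ b → b < m → c a ≤ c b := by
    intro a b hab hbm
    rcases eq_or_lt_of_le hab with rfl | h
    · exact le_rfl
    · exact (cmono h hbm).le
  have cmem : ∀ j, j < m → c j ∈ P := by
    intro j hj
    have : c j ∈ L := by rw [hcg j hj]; exact List.getElem_mem _
    rwa [hL, Finset.mem_sort] at this
  have cS : ∀ j, j < m → c j ∈ S := by
    intro j hj
    obtain ⟨i, hi, hie⟩ := Finset.mem_image.mp (cmem j hj)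
    exact hie ▸ hu i hi
  have hindex : ∀ v ∈ P, ∃ K, ∃ h : K < m, v = c K := by
    intro v hv
    have : v ∈ L := by rwa [hL, Finset.mem_sort]
    obtain ⟨K, hK, he⟩ := List.mem_iff_getElem.mp this
    exact ⟨K, hK, ((hcg K hK).trans he).symm⟩
  have humem : ∀ i ∈ T, u i ∈ P := fun i hi => Finset.mem_image_of_mem u hi
  have hc0le : ∀ v ∈ P, c 0 ≤ v := by
    intro v hv
    obtain ⟨K, hK, rfl⟩ := hindex v hv
    exact cmono' (Nat.zero_le K) hK
  have hlast : ∀ v ∈ P, v ≤ c (m - 1) := by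
    intro v hv
    obtain ⟨K, hK, rfl⟩ := hindex v hv
    exact cmono' (Nat.le_sub_one_of_lt hK) (by omega)
  set sl : ℕ → ℝ := fun j => (g (c (j+1)) - g (c j)) / (c (j+1) - c j) with hsl
  have hrep : ∀ v ∈ P, g v = g (c 0) +
      ∑ j ∈ range (m - 1), sl j * (max (v - c j) 0 - max (v - c (j+1)) 0) := by
    intro v hv
    obtain ⟨K, hK, rfl⟩ := hindex v hv
    have hterm : ∀ j ∈ range (m - 1),
        sl j * (max (c K - c j) 0 - max (c K - c (j+1)) 0)
          = if j < K then g (c (j+1)) - g (c j) else 0 := by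
      intro j hj
      have hjm : j + 1 < m := by have := mem_range.mp hj; omega
      by_cases hjK : j < K
      · have h1 : c j < c K := cmono hjK hK
        have h2 : c (j+1) ≤ c K := cmono' (Nat.succ_le_of_lt hjK) hK
        rw [max_eq_left (by linarith), max_eq_left (by linarith), if_pos hjK]
        have hne : c (j+1) - c j ≠ 0 := by
          have := cmono (Nat.lt_succ_self j) hjm; linarith
        rw [show c K - c j - (c K - c (j+1)) = c (j+1) - c j from by ring]
        simp only [hsl]
        exact div_mul_cancel₀ _ hne
      · push_neg at hjK
        have h1 : c K ≤ c j := cmono' hjK (by omega)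
        have h2 : c K ≤ c (j+1) := h1.trans (cmono (Nat.lt_succ_self j) hjm).le
        rw [max_eq_right (by linarith), max_eq_right (by linarith), if_neg (by omega)]
        ring
    rw [Finset.sum_congr rfl hterm, ← Finset.sum_filter]
    have hfe : (range (m-1)).filter (· < K) = range K := by
      ext j; simp only [mem_filter, mem_range]; omega
    rw [hfe]
    have htel := Finset.sum_range_sub (fun j => g (c j)) K
    rw [htel]; ring
  set Φ : ℕ → ℝ := fun j => ∑ i ∈ T, w i * max (u i - c j) 0 with hΦ
  have hΦnn : ∀ j, 0 ≤ Φ j := fun j => hhinge (c j)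
  have hΦ0 : Φ 0 = 0 := by
    have h : ∀ i ∈ T, w i * max (u i - c 0) 0 = w i * u i - w i * c 0 := by
      intro i hi
      rw [max_eq_left (sub_nonneg.mpr (hc0le _ (humem i hi)))]; ring
    rw [hΦ]
    simp only []
    rw [Finset.sum_congr rfl h, Finset.sum_sub_distrib, hmean, ← Finset.sum_mul, hmass]
    ring
  have hΦlast : Φ (m - 1) = 0 := by
    have h : ∀ i ∈ T, w i * max (u i - c (m-1)) 0 = 0 := by
      intro i hi
      rw [max_eq_right (sub_nonpos.mpr (hlast _ (humem i hi)))]; ring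
    rw [hΦ]
    simp only []
    rw [Finset.sum_congr rfl h]; simp
  have hmain : ∑ i ∈ T, w i * g (u i)
      = ∑ j ∈ range (m - 1), sl j * (Φ j - Φ (j+1)) := by
    have h1 : ∀ i ∈ T, w i * g (u i) = w i * g (c 0) +
        ∑ j ∈ range (m - 1), sl j * (w i * max (u i - c j) 0 - w i * max (u i - c (j+1)) 0) := by
      intro i hi
      rw [hrep (u i) (humem i hi), mul_add, Finset.mul_sum]
      congr 1
      exact Finset.sum_congr rfl fun j _ => by ring
    rw [Finset.sum_congr rfl h1, Finset.sum_add_distrib, ← Finset.sum_mul, hmass]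
    rw [Finset.sum_comm]
    simp only [zero_mul, zero_add]
    refine Finset.sum_congr rfl fun j _ => ?_
    rw [← Finset.mul_sum, Finset.sum_sub_distrib]
  rw [hmain]
  rcases eq_or_lt_of_le hm1 with hm1' | hm2
  · rw [← hm1']; simp
  have hslmono : ∀ j, j + 2 < m → sl j ≤ sl (j+1) := by
    intro j hj
    exact hg.slope_mono_adjacent (cS j (by omega)) (cS (j+2) hj)
      (cmono (Nat.lt_succ_self j) (by omega)) (cmono (Nat.lt_succ_self (j+1)) hj)
  have hsplit : m - 1 = (m - 2) + 1 := by omega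
  have key : ∑ j ∈ range (m-1), sl j * (Φ j - Φ (j+1))
      = ∑ j ∈ range (m-2), (sl (j+1) - sl j) * Φ (j+1) := by
    have h1 : ∑ j ∈ range (m-1), sl j * (Φ j - Φ (j+1))
        = ∑ j ∈ range (m-1), sl j * Φ j - ∑ j ∈ range (m-1), sl j * Φ (j+1) := by
      rw [← Finset.sum_sub_distrib]
      exact Finset.sum_congr rfl fun j _ => by ring
    have hlast' : Φ (m-2+1) = 0 := by rw [← hsplit]; exact hΦlast
    rw [h1, hsplit, Finset.sum_range_succ' (fun j => sl j * Φ j),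
      Finset.sum_range_succ (fun j => sl j * Φ (j+1)), hΦ0, hlast']
    rw [mul_zero, mul_zero, add_zero, add_zero, ← Finset.sum_sub_distrib]
    exact Finset.sum_congr rfl fun j _ => by ring
  rw [key]
  refine Finset.sum_nonneg fun j hj => mul_nonneg (sub_nonneg.mpr (hslmono j ?_)) (hΦnn _)
  have := mem_range.mp hj; omega

private lemma pos_side (n : ℕ) (hn : 2 ≤ n) (e : ℤ → ℝ) (hper : ∀ i : ℤ, e (i + n) = e i)
    (hsum : ∑ i ∈ Icc (1:ℤ) n, e i = 0) (r : ℤ) (c : ℝ) (hc : 0 ≤ c) :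
    (n:ℝ) * ∑ s ∈ Icc (1:ℤ) n, max ((e s - e (s + r))/n - c) 0
      ≤ 2 * ∑ i ∈ Icc (1:ℤ) n, max (e i - c) 0 := by
  classical
  have hn0 : (0:ℝ) < n := by positivity
  have hn1 : (2:ℝ) ≤ (n:ℝ) := by exact_mod_cast hn
  have step1 : ∀ s : ℤ, (n:ℝ) * max ((e s - e (s + r))/n - c) 0
      ≤ max (e s - c) 0 + max (-(e (s+r)) - ((n:ℝ)-1)*c) 0 := by
    intro s
    have h1 : (n:ℝ) * max ((e s - e (s + r))/n - c) 0
        = max ((n:ℝ) * ((e s - e (s + r))/n - c)) 0 := by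
      rw [mul_max_of_nonneg _ _ (le_of_lt hn0), mul_zero]
    have h2 : (n:ℝ) * ((e s - e (s + r))/n - c) = (e s - c) + (-(e (s+r)) - ((n:ℝ)-1)*c) := by
      field_simp
      ring
    rw [h1, h2]
    exact max_add_le'' _ _
  have step2 : (n:ℝ) * ∑ s ∈ Icc (1:ℤ) n, max ((e s - e (s + r))/n - c) 0
      ≤ ∑ s ∈ Icc (1:ℤ) n, max (e s - c) 0
        + ∑ s ∈ Icc (1:ℤ) n, max (-(e (s+r)) - ((n:ℝ)-1)*c) 0 := by
    rw [Finset.mul_sum, ← Finset.sum_add_distrib]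
    exact Finset.sum_le_sum fun s _ => step1 s
  have hshift : ∑ s ∈ Icc (1:ℤ) n, max (-(e (s+r)) - ((n:ℝ)-1)*c) 0
      = ∑ i ∈ Icc (1:ℤ) n, max (-(e i) - ((n:ℝ)-1)*c) 0 :=
    shift_sum n r (fun i => max (-(e i) - ((n:ℝ)-1)*c) 0) (fun i => by simp only [hper])
  have step3 : ∑ i ∈ Icc (1:ℤ) n, max (-(e i) - ((n:ℝ)-1)*c) 0
      ≤ ∑ i ∈ Icc (1:ℤ) n, max (e i - c) 0 := by
    set A : Finset ℤ := Icc (1:ℤ) n with hA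
    have hcardA : A.card = n := by rw [hA, Int.card_Icc]; simp
    set K : Finset ℤ := A.filter (fun i => 0 < -(e i) - ((n:ℝ)-1)*c) with hK
    set Pos : Finset ℤ := A.filter (fun i => 0 < e i) with hPos
    have hLHS : ∑ i ∈ A, max (-(e i) - ((n:ℝ)-1)*c) 0
        = ∑ i ∈ K, (-(e i) - ((n:ℝ)-1)*c) := by
      rw [← Finset.sum_filter_add_sum_filter_not A (fun i => 0 < -(e i) - ((n:ℝ)-1)*c)
        (fun i => max (-(e i) - ((n:ℝ)-1)*c) 0)]
      have e1 : ∀ i ∈ K, max (-(e i) - ((n:ℝ)-1)*c) 0 = -(e i) - ((n:ℝ)-1)*c := by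
        intro i hi; exact max_eq_left (le_of_lt (Finset.mem_filter.mp hi).2)
      have e2 : ∀ i ∈ A.filter (fun i => ¬ (0 < -(e i) - ((n:ℝ)-1)*c)),
          max (-(e i) - ((n:ℝ)-1)*c) 0 = 0 := fun i hi =>
        max_eq_right (not_lt.mp (Finset.mem_filter.mp hi).2)
      rw [Finset.sum_congr rfl e1, Finset.sum_congr rfl e2]
      simp
    have hnc : 0 ≤ ((n:ℝ)-1)*c := mul_nonneg (by linarith) hc
    have hdisj : ∀ i ∈ K, i ∉ Pos := by
      intro i hi hp
      have h1 := (Finset.mem_filter.mp hi).2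
      have h2 := (Finset.mem_filter.mp hp).2
      linarith
    have hKsub : K ⊆ A.filter (fun i => ¬ (0 < e i)) := by
      intro i hi
      refine Finset.mem_filter.mpr ⟨(Finset.mem_filter.mp hi).1, fun h => hdisj i hi ?_⟩
      exact Finset.mem_filter.mpr ⟨(Finset.mem_filter.mp hi).1, h⟩
    have hsplit2 := Finset.sum_filter_add_sum_filter_not A (fun i => 0 < e i) e
    rw [hsum] at hsplit2
    have hPsum : ∑ i ∈ A.filter (fun i => ¬ (0 < e i)), (-(e i)) = ∑ i ∈ Pos, e i := by
      rw [Finset.sum_neg_distrib]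
      linarith
    have hK_le : ∑ i ∈ K, (-(e i)) ≤ ∑ i ∈ Pos, e i := by
      rw [← hPsum]
      refine Finset.sum_le_sum_of_subset_of_nonneg hKsub fun i hiA hiK => ?_
      have := (Finset.mem_filter.mp hiA).2
      simp only [not_lt] at this
      linarith
    rcases K.eq_empty_or_nonempty with hKe | hKne
    · rw [hLHS, hKe]
      simp only [Finset.sum_empty]
      exact Finset.sum_nonneg fun i _ => le_max_right _ _
    · set k : ℕ := K.card with hk
      set p : ℕ := Pos.card with hp
      have hk1 : 1 ≤ k := Finset.card_pos.mpr hKne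
      have hpk : p + k ≤ n := by
        rw [← hcardA]
        have hd : Disjoint Pos K := Finset.disjoint_right.mpr hdisj
        rw [← Finset.card_union_of_disjoint hd]
        exact Finset.card_le_card (Finset.union_subset (Finset.filter_subset _ _) (Finset.filter_subset _ _))
      have hpkn : p ≤ k * (n - 1) := by
        have h1 : n ≤ k * n := Nat.le_mul_of_pos_left n hk1
        have h2 : k * (n-1) = k * n - k := by
          rw [Nat.mul_sub]
          simp
        omega
      have hcast : (p:ℝ) * c ≤ (k:ℝ) * ((n:ℝ)-1) * c := by
        apply mul_le_mul_of_nonneg_right _ hc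
        have h3 : ((p:ℝ)) ≤ ((k * (n-1) : ℕ) : ℝ) := by exact_mod_cast hpkn
        have h4 : ((k * (n-1) : ℕ) : ℝ) = (k:ℝ) * ((n:ℝ) - 1) := by
          rw [Nat.cast_mul, Nat.cast_sub (by omega : 1 ≤ n), Nat.cast_one]
        linarith
      have hLv : ∑ i ∈ K, (-(e i) - ((n:ℝ)-1)*c) = ∑ i ∈ K, (-(e i)) - (k:ℝ) * (((n:ℝ)-1)*c) := by
        rw [Finset.sum_sub_distrib, Finset.sum_const, nsmul_eq_mul]
      have hRv : ∑ i ∈ Pos, (e i - c) = ∑ i ∈ Pos, e i - (p:ℝ) * c := by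
        rw [Finset.sum_sub_distrib, Finset.sum_const, nsmul_eq_mul]
      have hRHS1 : ∑ i ∈ Pos, (e i - c) ≤ ∑ i ∈ Pos, max (e i - c) 0 :=
        Finset.sum_le_sum fun i _ => le_max_left _ _
      have hRHS2 : ∑ i ∈ Pos, max (e i - c) 0 ≤ ∑ i ∈ A, max (e i - c) 0 :=
        Finset.sum_le_sum_of_subset_of_nonneg (Finset.filter_subset _ _)
          (fun i _ _ => le_max_right _ _)
      rw [hLHS, hLv]
      have heq : (k:ℝ) * (((n:ℝ)-1)*c) = (k:ℝ) * ((n:ℝ)-1) * c := by ring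
      rw [heq]
      linarith
  rw [hshift] at step2
  linarith [step2, step3]

theorem cyclic_popoviciu (I : Set ℝ) (f : ℝ → ℝ) (hf : ConvexOn ℝ I f)
    (n : ℕ) (hn : 2 ≤ n) (x : ℤ → ℝ)
    (hper : ∀ i : ℤ, x (i + n) = x i) (hx : ∀ i, x i ∈ I) (r : ℤ) :
    2 * (∑ i ∈ Finset.Icc (1 : ℤ) n, f (x i)) +
      (n : ℝ) * ((n : ℝ) - 2) * f ((∑ i ∈ Finset.Icc (1 : ℤ) n, x i) / n) ≥
    (n : ℝ) * ∑ s ∈ Finset.Icc (1 : ℤ) n,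
      f ((∑ i ∈ Finset.Icc (1 : ℤ) n, x i) / n + (x s - x (s + r)) / n) := by
  classical
  have hn2 : (2:ℝ) ≤ (n:ℝ) := by exact_mod_cast hn
  have hn0 : (0:ℝ) < (n:ℝ) := by linarith
  have hnne : (n:ℝ) ≠ 0 := ne_of_gt hn0
  set N : Finset ℤ := Finset.Icc (1:ℤ) n with hN
  have hcardN : N.card = n := by rw [hN, Int.card_Icc]; simp
  set xbar : ℝ := (∑ i ∈ N, x i) / n with hxbar
  have hsx : ∑ i ∈ N, x i = (n:ℝ) * xbar := by
    rw [hxbar]; field_simp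
  -- periodicity for integer multiples
  have hpermul : ∀ k : ℤ, ∀ i : ℤ, x (i + k * n) = x i := by
    intro k
    induction k using Int.induction_on with
    | zero => intro i; simp
    | succ m ih =>
        intro i
        rw [show i + ((m:ℤ)+1) * n = (i + m * n) + n from by ring, hper, ih]
    | pred m ih =>
        intro i
        rw [show i + (-(m:ℤ)-1) * n = (i - n) + (-(m:ℤ)) * n from by ring, ih (i - n)]
        have h2 : x (i - n + n) = x (i - n) := hper _
        rw [sub_add_cancel] at h2
        exact h2.symm
  -- reduce an arbitrary index into the window
  have hreduce : ∀ m : ℤ, ∃ j, j ∈ N ∧ x m = x j := by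
    intro m
    have hnZ : (0:ℤ) < (n:ℤ) := by exact_mod_cast (by omega : 0 < n)
    refine ⟨(m - 1) % n + 1, ?_, ?_⟩
    · rw [hN, Finset.mem_Icc]
      constructor
      · have := Int.emod_nonneg (m-1) (ne_of_gt hnZ); omega
      · have := Int.emod_lt_of_pos (m-1) hnZ; omega
    · have hdm := Int.mul_ediv_add_emod (m-1) (n:ℤ)
      have key : ((m - 1) % n + 1) + ((m-1)/n) * n = m := by
        rw [mul_comm]; linarith [hdm]
      calc x m = x (((m - 1) % n + 1) + ((m-1)/n) * n) := by rw [key]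
        _ = x ((m - 1) % n + 1) := hpermul _ _
  -- shift-invariance of sums
  have hxshift : ∀ (G : ℤ → ℝ), (∀ i : ℤ, G (i + n) = G i) →
      ∑ s ∈ N, G (s + r) = ∑ s ∈ N, G s := by
    intro G hG; rw [hN]; exact shift_sum n r G hG
  -- mean membership
  have hxbarI : xbar ∈ I := by
    have hrw : xbar = ∑ i ∈ N, (1/(n:ℝ)) • x i := by
      rw [hxbar, Finset.sum_div]
      exact Finset.sum_congr rfl fun i _ => by rw [smul_eq_mul]; ring
    rw [hrw]
    refine hf.1.sum_mem (fun i _ => by positivity) ?_ (fun i _ => hx i)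
    rw [Finset.sum_const, hcardN, nsmul_eq_mul]
    field_simp
  -- each shifted point lies in I
  have hyI : ∀ s ∈ N, xbar + (x s - x (s + r)) / n ∈ I := by
    intro s hs
    obtain ⟨j, hjN, hxj⟩ := hreduce (s + r)
    set W : ℤ → ℝ := fun k =>
      (1 + (if k = s then 1 else 0) - (if k = j then 1 else 0)) / n with hW
    have hWnn : ∀ k ∈ N, 0 ≤ W k := by
      intro k _
      rw [hW]
      apply div_nonneg _ (le_of_lt hn0)
      split_ifs <;> norm_num
    have hWsum : ∑ k ∈ N, W k = 1 := by
      simp only [hW]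
      rw [← Finset.sum_div]
      rw [Finset.sum_sub_distrib, Finset.sum_add_distrib]
      rw [Finset.sum_ite_eq' N s (fun _ => (1:ℝ)), Finset.sum_ite_eq' N j (fun _ => (1:ℝ))]
      rw [if_pos hs, if_pos hjN, Finset.sum_const, hcardN, nsmul_eq_mul, mul_one]
      field_simp
      ring
    have hWval : ∑ k ∈ N, W k • x k = xbar + (x s - x (s + r)) / n := by
      have hterm : ∀ k ∈ N, W k • x k
          = x k / n + (if k = s then x k / n else 0) - (if k = j then x k / n else 0) := by
        intro k _
        simp only [hW, smul_eq_mul]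
        split_ifs <;> ring
      rw [Finset.sum_congr rfl hterm, Finset.sum_sub_distrib, Finset.sum_add_distrib]
      rw [Finset.sum_ite_eq' N s (fun k => x k / n), Finset.sum_ite_eq' N j (fun k => x k / n)]
      rw [if_pos hs, if_pos hjN, ← Finset.sum_div, hxj, hxbar]
      ring
    rw [← hWval]
    exact hf.1.sum_mem hWnn hWsum (fun k _ => hx k)
  -- set up the weighted point system
  set w : ℤ × Fin 3 → ℝ := fun p =>
    if p.2 = 0 then -(n:ℝ) else if p.2 = 1 then 2 else (n:ℝ) - 2 with hw
  set u : ℤ × Fin 3 → ℝ := fun p =>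
    if p.2 = 0 then xbar + (x p.1 - x (p.1 + r)) / n
    else if p.2 = 1 then x p.1 else xbar with hu
  set T : Finset (ℤ × Fin 3) := N ×ˢ (Finset.univ : Finset (Fin 3)) with hT
  have hexpand : ∀ (F : ℤ × Fin 3 → ℝ), ∑ p ∈ T, F p
      = ∑ i ∈ N, (F (i, 0) + F (i, 1) + F (i, 2)) := by
    intro F
    rw [hT, Finset.sum_product]
    exact Finset.sum_congr rfl fun i _ => by
      rw [Fin.sum_univ_three]
  have hsumy : ∑ s ∈ N, (xbar + (x s - x (s + r)) / n) = (n:ℝ) * xbar := by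
    rw [Finset.sum_add_distrib, Finset.sum_const, hcardN, nsmul_eq_mul]
    have : ∑ s ∈ N, (x s - x (s + r)) / n
        = (∑ s ∈ N, x s - ∑ s ∈ N, x (s + r)) / n := by
      rw [← Finset.sum_div, Finset.sum_sub_distrib]
    rw [this, hxshift x hper]
    simp
  have hw0 : ∀ i : ℤ, w (i, 0) = -(n:ℝ) := fun i => by simp [hw]
  have hw1 : ∀ i : ℤ, w (i, 1) = 2 := fun i => by simp [hw]
  have hw2 : ∀ i : ℤ, w (i, 2) = (n:ℝ) - 2 := fun i => by simp [hw]
  have hu0 : ∀ i : ℤ, u (i, 0) = xbar + (x i - x (i + r)) / n := fun i => by simp [hu]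
  have hu1 : ∀ i : ℤ, u (i, 1) = x i := fun i => by simp [hu]
  have hu2 : ∀ i : ℤ, u (i, 2) = xbar := fun i => by simp [hu]
  -- e and its properties
  set e : ℤ → ℝ := fun i => x i - xbar with he
  have hpere : ∀ i : ℤ, e (i + n) = e i := by
    intro i; rw [he]; simp only []; rw [hper]
  have hsume : ∑ i ∈ N, e i = 0 := by
    rw [he]
    simp only []
    rw [Finset.sum_sub_distrib, Finset.sum_const, hcardN, nsmul_eq_mul, hsx]
    ring
  have hperme : ∀ i : ℤ, (-(e (i + n))) = -(e i) := fun i => by rw [hpere]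
  have hsumme : ∑ i ∈ N, (-(e i)) = 0 := by
    rw [Finset.sum_neg_distrib, hsume]; ring
  have ht0 : ∑ s ∈ N, (e s - e (s + r)) / n = 0 := by
    rw [← Finset.sum_div, Finset.sum_sub_distrib, hxshift e hpere]
    simp
  -- apply the master lemma
  have hkar := karamata_signed T w u I f hf
    (by
      intro p hp
      rw [hT, Finset.mem_product] at hp
      rcases p with ⟨i, j⟩
      fin_cases j
      · show u (i, 0) ∈ I
        rw [hu0]; exact hyI i hp.1
      · show u (i, 1) ∈ I
        rw [hu1]; exact hx i
      · show u (i, 2) ∈ I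
        rw [hu2]; exact hxbarI)
    (by
      rw [hexpand w]
      have : ∀ i ∈ N, w (i, 0) + w (i, 1) + w (i, 2) = 0 := by
        intro i _; rw [hw0, hw1, hw2]; ring
      rw [Finset.sum_congr rfl this]
      simp)
    (by
      rw [hexpand (fun p => w p * u p)]
      have hterm : ∀ i ∈ N, w (i,0) * u (i,0) + w (i,1) * u (i,1) + w (i,2) * u (i,2)
          = -(n:ℝ) * (xbar + (x i - x (i + r)) / n) + 2 * x i + ((n:ℝ) - 2) * xbar := by
        intro i _; rw [hw0, hw1, hw2, hu0, hu1, hu2]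
      rw [Finset.sum_congr rfl hterm]
      rw [Finset.sum_add_distrib, Finset.sum_add_distrib, ← Finset.mul_sum, ← Finset.mul_sum,
        hsumy, hsx, Finset.sum_const, hcardN, nsmul_eq_mul]
      ring)
    (by
      intro c
      set c' : ℝ := c - xbar with hc'
      rw [hexpand (fun p => w p * max (u p - c) 0)]
      have hterm : ∀ i ∈ N, w (i,0) * max (u (i,0) - c) 0 + w (i,1) * max (u (i,1) - c) 0
            + w (i,2) * max (u (i,2) - c) 0
          = -(n:ℝ) * max ((e i - e (i + r)) / n - c') 0 + 2 * max (e i - c') 0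
            + ((n:ℝ) - 2) * max (-c') 0 := by
        intro i _
        rw [hw0, hw1, hw2, hu0, hu1, hu2]
        have q1 : xbar + (x i - x (i + r)) / n - c = (e i - e (i + r)) / n - c' := by
          rw [he, hc']; simp only []; ring
        have q2 : x i - c = e i - c' := by rw [he, hc']; simp only []; ring
        have q3 : xbar - c = -c' := by rw [hc']; ring
        rw [q1, q2, q3]
      rw [Finset.sum_congr rfl hterm]
      rw [Finset.sum_add_distrib, Finset.sum_add_distrib, ← Finset.mul_sum, ← Finset.mul_sum,
        ← Finset.mul_sum]
      set S1 : ℝ := ∑ i ∈ N, max ((e i - e (i + r)) / n - c') 0 with hS1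
      set S2 : ℝ := ∑ i ∈ N, max (e i - c') 0 with hS2
      rw [Finset.sum_const, hcardN, nsmul_eq_mul]
      rcases le_or_gt 0 c' with hcp | hcn
      · -- c' ≥ 0
        have hps := pos_side n hn e hpere (hN ▸ hsume) r c' hcp
        rw [← hN] at hps
        have hm0 : max (-c') 0 = 0 := max_eq_right (by linarith)
        rw [hm0]
        rw [← hS1, ← hS2] at hps
        nlinarith [hps]
      · -- c' < 0 : mirror
        have hps := pos_side n hn (fun i => -(e i)) hperme (hN ▸ hsumme) r (-c') (by linarith)
        rw [← hN] at hps
        have hm0 : max (-c') 0 = -c' := max_eq_left (by linarith)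
        rw [hm0]
        -- flip identities
        have hf1 : S1 = -(n:ℝ) * c'
            + ∑ i ∈ N, max ((-(e i) - -(e (i + r))) / n - (-c')) 0 := by
          rw [hS1]
          have : ∀ i ∈ N, max ((e i - e (i + r)) / n - c') 0
              = ((e i - e (i + r)) / n - c')
                + max ((-(e i) - -(e (i + r))) / n - (-c')) 0 := by
            intro i _
            rw [max_flip ((e i - e (i + r)) / n - c')]
            congr 2
            ring
          rw [Finset.sum_congr rfl this, Finset.sum_add_distrib, Finset.sum_sub_distrib, ht0,
            Finset.sum_const, hcardN, nsmul_eq_mul]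
          ring
        have hf2 : S2 = -(n:ℝ) * c' + ∑ i ∈ N, max (-(e i) - (-c')) 0 := by
          rw [hS2]
          have : ∀ i ∈ N, max (e i - c') 0 = (e i - c') + max (-(e i) - (-c')) 0 := by
            intro i _
            rw [max_flip (e i - c')]
            congr 2
            ring
          rw [Finset.sum_congr rfl this, Finset.sum_add_distrib, Finset.sum_sub_distrib, hsume,
            Finset.sum_const, hcardN, nsmul_eq_mul]
          ring
        rw [hf1, hf2]
        have hn2' : (0:ℝ) ≤ (n:ℝ) - 2 := by linarith
        nlinarith [hps])
  -- extract the conclusion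
  rw [hexpand (fun p => w p * f (u p))] at hkar
  have hterm : ∀ i ∈ N, w (i,0) * f (u (i,0)) + w (i,1) * f (u (i,1)) + w (i,2) * f (u (i,2))
      = -(n:ℝ) * f (xbar + (x i - x (i + r)) / n) + 2 * f (x i) + ((n:ℝ) - 2) * f xbar := by
    intro i _; rw [hw0, hw1, hw2, hu0, hu1, hu2]
  rw [Finset.sum_congr rfl hterm] at hkar
  rw [Finset.sum_add_distrib, Finset.sum_add_distrib, ← Finset.mul_sum, ← Finset.mul_sum,
    Finset.sum_const, hcardN, nsmul_eq_mul] at hkar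
  rw [ge_iff_le]
  nlinarith [hkar]
end

section
/- Let f be convex on an interval I ⊆ ℝ, let n ≥ 2, x₁, ..., xₙ ∈ I, w₁, ..., wₙ ≥ 0, with indices extended cyclically modulo n. Let w = ∑_v w_v and x = (∑_v w_v·x_v)/w. Assume w ≠ 0 and w + (w_s − w_{s+r}) ≠ 0 for all s ∈ {1,...,n}, where r is a fixed integer. Then 2·∑_{i=1}^n wᵢ·f(xᵢ) + (n−2)·w·f(x) ≥ ∑_{s=1}^n (w + (w_s − w_{s+r}))·f((∑_v w_v·x_v + (w_s·x_s − w_{s+r}·x_{s+r}))/(w + (w_s − w_{s+r}))). -/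
set_option maxHeartbeats 1000000

lemma jensen_sum' {I : Set ℝ} {f : ℝ → ℝ} (hf : ConvexOn ℝ I f) {α : Type*} {t : Finset α}
    {w x : α → ℝ} (h0 : ∀ i ∈ t, 0 ≤ w i) (hpos : 0 < ∑ i ∈ t, w i)
    (hxI : ∀ i ∈ t, x i ∈ I) :
    (∑ i ∈ t, w i) * f ((∑ i ∈ t, w i * x i) / (∑ i ∈ t, w i)) ≤ ∑ i ∈ t, w i * f (x i) := by
  have h := hf.map_centerMass_le h0 hpos hxI
  rw [Finset.centerMass, Finset.centerMass] at h
  simp only [smul_eq_mul, Function.comp] at h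
  rw [div_eq_inv_mul]
  calc (∑ i ∈ t, w i) * f ((∑ i ∈ t, w i)⁻¹ * ∑ i ∈ t, w i * x i)
      ≤ (∑ i ∈ t, w i) * ((∑ i ∈ t, w i)⁻¹ * ∑ i ∈ t, w i * f (x i)) := by
        exact mul_le_mul_of_nonneg_left h (le_of_lt hpos)
    _ = ∑ i ∈ t, w i * f (x i) := by field_simp

lemma mean_mem' {I : Set ℝ} (hI : Convex ℝ I) {α : Type*} {t : Finset α}
    {w x : α → ℝ} (h0 : ∀ i ∈ t, 0 ≤ w i) (hpos : 0 < ∑ i ∈ t, w i)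
    (hxI : ∀ i ∈ t, x i ∈ I) :
    (∑ i ∈ t, w i * x i) / (∑ i ∈ t, w i) ∈ I := by
  have h := hI.centerMass_mem h0 hpos hxI
  rw [Finset.centerMass] at h
  simpa [smul_eq_mul, div_eq_inv_mul] using h

lemma jensen3 {I : Set ℝ} {f : ℝ → ℝ} (hf : ConvexOn ℝ I f) {a b c p q u : ℝ}
    (ha : 0 ≤ a) (hb : 0 ≤ b) (hc : 0 ≤ c) (hsum : 0 < a + b + c)
    (hp : p ∈ I) (hq : q ∈ I) (hu : u ∈ I) :
    (a + b + c) * f ((a * p + b * q + c * u) / (a + b + c)) ≤ a * f p + b * f q + c * f u := by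
  have := jensen_sum' hf (t := (Finset.univ : Finset (Fin 3))) (w := ![a,b,c]) (x := ![p,q,u])
    (by intro i _; fin_cases i <;> assumption)
    (by simpa [Fin.sum_univ_three] using hsum)
    (by intro i _; fin_cases i <;> assumption)
  simpa [Fin.sum_univ_three] using this

theorem cyclic_popoviciu_weighted (I : Set ℝ) (f : ℝ → ℝ) (hf : ConvexOn ℝ I f)
    (n : ℕ) (hn : 2 ≤ n) (x w : ℤ → ℝ)
    (hxper : ∀ i : ℤ, x (i + n) = x i) (hwper : ∀ i : ℤ, w (i + n) = w i)
    (hx : ∀ i, x i ∈ I) (hw : ∀ i, 0 ≤ w i) (r : ℤ)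
    (hwsum : ∑ v ∈ Finset.Icc (1 : ℤ) n, w v ≠ 0)
    (hws : ∀ s ∈ Finset.Icc (1 : ℤ) (n : ℤ),
      (∑ v ∈ Finset.Icc (1 : ℤ) n, w v) + (w s - w (s + r)) ≠ 0) :
    2 * (∑ i ∈ Finset.Icc (1 : ℤ) n, w i * f (x i)) +
      ((n : ℝ) - 2) * (∑ v ∈ Finset.Icc (1 : ℤ) n, w v) *
        f ((∑ v ∈ Finset.Icc (1 : ℤ) n, w v * x v) / (∑ v ∈ Finset.Icc (1 : ℤ) n, w v)) ≥
    ∑ s ∈ Finset.Icc (1 : ℤ) n,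
      ((∑ v ∈ Finset.Icc (1 : ℤ) n, w v) + (w s - w (s + r))) *
        f (((∑ v ∈ Finset.Icc (1 : ℤ) n, w v * x v) + (w s * x s - w (s + r) * x (s + r))) /
            ((∑ v ∈ Finset.Icc (1 : ℤ) n, w v) + (w s - w (s + r)))) := by
  classical
  have hn0 : (0:ℤ) < (n:ℤ) := by exact_mod_cast Nat.lt_of_lt_of_le Nat.zero_lt_two hn
  set T : Finset ℤ := Finset.Icc (1:ℤ) (n:ℤ) with hT
  set τ : ℤ → ℤ := fun i => (i - 1) % (n:ℤ) + 1 with hτ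
  have hτmem : ∀ i : ℤ, τ i ∈ T := by
    intro i
    simp only [hτ, hT, Finset.mem_Icc]
    constructor
    · have := Int.emod_nonneg (i-1) (ne_of_gt hn0)
      omega
    · have := Int.emod_lt_of_pos (i-1) hn0
      omega
  have hτid : ∀ s ∈ T, τ s = s := by
    intro s hs
    simp only [hT, Finset.mem_Icc] at hs
    simp only [hτ]
    rw [Int.emod_eq_of_lt (by omega) (by omega)]
    omega
  have hτk : ∀ i : ℤ, ∃ k : ℤ, τ i = i + (n:ℤ) * k := by
    intro i
    refine ⟨-((i-1)/n), ?_⟩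
    simp only [hτ]
    have h1 := Int.mul_ediv_add_emod (i-1) (n:ℤ)
    have h2 : (n:ℤ) * (-((i-1)/(n:ℤ))) = -((n:ℤ)*((i-1)/(n:ℤ))) := by ring
    omega
  have hτper : ∀ (i k : ℤ), τ (i + (n:ℤ) * k) = τ i := by
    intro i k
    simp only [hτ]
    congr 1
    rw [show i + (n:ℤ)*k - 1 = i - 1 + (n:ℤ)*k by ring]
    simp [Int.add_mul_emod_self_left]
  have hperiod : ∀ g : ℤ → ℝ, (∀ i : ℤ, g (i + n) = g i) → ∀ (i k : ℤ), g (i + (n:ℤ) * k) = g i := by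
    intro g hp i k
    induction k using Int.induction_on with
    | zero => simp
    | succ k ih =>
        rw [show i + (n:ℤ)*((k:ℤ)+1) = (i + (n:ℤ)*k) + (n:ℤ) by ring, hp, ih]
    | pred k ih =>
        have h := hp (i + (n:ℤ)*(-(k:ℤ)-1))
        rw [show i + (n:ℤ)*(-(k:ℤ)-1) + (n:ℤ) = i + (n:ℤ)*(-(k:ℤ)) by ring] at h
        rw [← h]
        exact ih
  have hgτ : ∀ g : ℤ → ℝ, (∀ i : ℤ, g (i + n) = g i) → ∀ i : ℤ, g (τ i) = g i := by
    intro g hp i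
    obtain ⟨k, hk⟩ := hτk i
    rw [hk, hperiod g hp]
  have hshift : ∀ F : ℤ → ℝ, ∑ s ∈ T, F (τ (s + r)) = ∑ t ∈ T, F t := by
    intro F
    apply Finset.sum_nbij' (fun s => τ (s + r)) (fun t => τ (t - r))
    · intro a _; exact hτmem _
    · intro a _; exact hτmem _
    · intro a ha
      obtain ⟨k, hk⟩ := hτk (a + r)
      rw [hk, show a + r + (n:ℤ)*k - r = a + (n:ℤ)*k by ring, hτper, hτid a ha]
    · intro a ha
      obtain ⟨k, hk⟩ := hτk (a - r)
      rw [hk, show a - r + (n:ℤ)*k + r = a + (n:ℤ)*k by ring, hτper, hτid a ha]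
    · intro a _; rfl
  -- basic quantities
  set W : ℝ := ∑ v ∈ T, w v with hWdef
  set Sx : ℝ := ∑ v ∈ T, w v * x v with hSxdef
  set m : ℝ := Sx / W with hmdef
  set S : ℝ := ∑ i ∈ T, w i * f (x i) with hSdef
  have hwT : ∀ i ∈ T, 0 ≤ w i := fun i _ => hw i
  have hxT : ∀ i ∈ T, x i ∈ I := fun i _ => hx i
  have hWpos : 0 < W := lt_of_le_of_ne (Finset.sum_nonneg hwT) (Ne.symm hwsum)
  have hmI : m ∈ I := mean_mem' hf.1 hwT hWpos hxT
  have hWm : W * m = Sx := by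
    rw [hmdef]; field_simp
  have hwtW : ∀ t ∈ T, w t ≤ W := by
    intro t ht
    exact Finset.single_le_sum hwT ht
  -- partition
  set L : Finset ℤ := T.filter (fun t => x t < m) with hL
  set R : Finset ℤ := T.filter (fun t => m < x t) with hR
  set M : Finset ℤ := T.filter (fun t => x t = m) with hM
  have hsplit : ∀ g : ℤ → ℝ, ∑ t ∈ T, g t = ∑ t ∈ L, g t + ∑ t ∈ R, g t + ∑ t ∈ M, g t := by
    intro g
    have h1 := Finset.sum_filter_add_sum_filter_not T (fun t => x t < m) g
    have h2 := Finset.sum_filter_add_sum_filter_not (T.filter (fun t => ¬ x t < m))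
      (fun t => m < x t) g
    rw [Finset.filter_filter, Finset.filter_filter] at h2
    have e1 : T.filter (fun t => ¬ x t < m ∧ m < x t) = R := by
      rw [hR]
      apply Finset.filter_congr
      intro t _
      constructor
      · exact fun h => h.2
      · exact fun h => ⟨not_lt.2 (le_of_lt h), h⟩
    have e2 : T.filter (fun t => ¬ x t < m ∧ ¬ m < x t) = M := by
      rw [hM]
      apply Finset.filter_congr
      intro t _
      constructor
      · intro h; exact le_antisymm (not_lt.1 h.2) (not_lt.1 h.1)
      · intro h; exact ⟨by rw [h]; exact lt_irrefl m, by rw [h]; exact lt_irrefl m⟩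
    rw [e1, e2] at h2
    linarith
  set WL : ℝ := ∑ t ∈ L, w t with hWL
  set WR : ℝ := ∑ t ∈ R, w t with hWR
  set WM : ℝ := ∑ t ∈ M, w t with hWM
  set V : ℝ := ∑ t ∈ R, w t * (x t - m) with hV
  set VL : ℝ := ∑ t ∈ L, w t * (m - x t) with hVL
  have hwL : ∀ t ∈ L, 0 ≤ w t := by intro t _; exact hw t
  have hwR : ∀ t ∈ R, 0 ≤ w t := by intro t _; exact hw t
  have hWL0 : 0 ≤ WL := Finset.sum_nonneg hwL
  have hWR0 : 0 ≤ WR := Finset.sum_nonneg hwR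
  have hWM0 : 0 ≤ WM := Finset.sum_nonneg (by intro t _; exact hw t)
  have hVterm : ∀ t ∈ R, 0 ≤ w t * (x t - m) := by
    intro t ht
    have := (Finset.mem_filter.1 ht).2
    have hxm : 0 ≤ x t - m := by linarith
    exact mul_nonneg (hw t) hxm
  have hVLterm : ∀ t ∈ L, 0 ≤ w t * (m - x t) := by
    intro t ht
    have := (Finset.mem_filter.1 ht).2
    have hxm : 0 ≤ m - x t := by linarith
    exact mul_nonneg (hw t) hxm
  have hV0 : 0 ≤ V := Finset.sum_nonneg hVterm
  have hVL0 : 0 ≤ VL := Finset.sum_nonneg hVLterm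
  have hsum0 : ∑ t ∈ T, w t * (x t - m) = 0 := by
    have : ∑ t ∈ T, w t * (x t - m) = Sx - W * m := by
      rw [hSxdef, hWdef, Finset.sum_mul]
      rw [← Finset.sum_sub_distrib]
      apply Finset.sum_congr rfl
      intro t _
      ring
    rw [this, hWm]; ring
  have hVLV : VL = V := by
    have hs := hsplit (fun t => w t * (x t - m))
    rw [hsum0] at hs
    have hMz : ∑ t ∈ M, w t * (x t - m) = 0 := by
      apply Finset.sum_eq_zero
      intro t ht
      have := (Finset.mem_filter.1 ht).2
      rw [this]; ring
    have hLz : ∑ t ∈ L, w t * (x t - m) = -VL := by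
      rw [hVL, ← Finset.sum_neg_distrib]
      apply Finset.sum_congr rfl
      intro t _; ring
    rw [hMz, hLz] at hs
    rw [hV]
    linarith
  have hWsplit : W = WL + WR + WM := hsplit w
  -- the means of the two sides
  set qL : ℝ := if WL = 0 then m else (∑ t ∈ L, w t * x t) / WL with hqL
  set qR : ℝ := if WR = 0 then m else (∑ t ∈ R, w t * x t) / WR with hqR
  have hqLI : qL ∈ I := by
    rw [hqL]
    by_cases h : WL = 0
    · simp [h, hmI]
    · simp only [h, if_false]
      exact mean_mem' hf.1 hwL (lt_of_le_of_ne hWL0 (Ne.symm h)) (fun t _ => hx t)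
  have hqRI : qR ∈ I := by
    rw [hqR]
    by_cases h : WR = 0
    · simp [h, hmI]
    · simp only [h, if_false]
      exact mean_mem' hf.1 hwR (lt_of_le_of_ne hWR0 (Ne.symm h)) (fun t _ => hx t)
  have hqLval : WL ≠ 0 → WL * qL = ∑ t ∈ L, w t * x t := by
    intro h
    rw [hqL]; simp only [h, if_false]; field_simp
  have hqRval : WR ≠ 0 → WR * qR = ∑ t ∈ R, w t * x t := by
    intro h
    rw [hqR]; simp only [h, if_false]; field_simp
  -- zero-weight consequences
  have hWLzero : WL = 0 → ∀ t ∈ L, w t = 0 := by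
    intro h t ht
    exact (Finset.sum_eq_zero_iff_of_nonneg hwL).1 h t ht
  have hWRzero : WR = 0 → ∀ t ∈ R, w t = 0 := by
    intro h t ht
    exact (Finset.sum_eq_zero_iff_of_nonneg hwR).1 h t ht
  have hVzeroR : V = 0 → ∀ t ∈ R, w t = 0 := by
    intro h t ht
    have h0 := (Finset.sum_eq_zero_iff_of_nonneg hVterm).1 h t ht
    have := (Finset.mem_filter.1 ht).2
    have hxm : 0 < x t - m := by linarith
    by_contra hne
    have : 0 < w t * (x t - m) := mul_pos (lt_of_le_of_ne (hw t) (Ne.symm hne)) hxm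
    linarith
  have hVzeroL : V = 0 → ∀ t ∈ L, w t = 0 := by
    intro h t ht
    have hVL' : VL = 0 := by rw [hVLV, h]
    have h0 := (Finset.sum_eq_zero_iff_of_nonneg hVLterm).1 hVL' t ht
    have := (Finset.mem_filter.1 ht).2
    have hxm : 0 < m - x t := by linarith
    by_contra hne
    have : 0 < w t * (m - x t) := mul_pos (lt_of_le_of_ne (hw t) (Ne.symm hne)) hxm
    linarith
  -- transport coefficients
  set C : ℤ → ℝ := fun t => if m < x t then w t * (x t - m) * WL / V
    else if x t < m then w t * (m - x t) * WR / V else 0 with hC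
  set Q : ℤ → ℝ := fun t => if m < x t then qL else if x t < m then qR else m with hQ
  have hQI : ∀ t, Q t ∈ I := by
    intro t
    rw [hQ]
    by_cases h1 : m < x t
    · simp [h1, hqLI]
    · by_cases h2 : x t < m
      · simp [h1, h2, hqRI]
      · simp [h1, h2, hmI]
  have hC0 : ∀ t, 0 ≤ C t := by
    intro t
    rw [hC]
    by_cases h1 : m < x t
    · simp only [h1, if_true]
      apply div_nonneg _ hV0
      apply mul_nonneg (mul_nonneg (hw t) (by linarith)) hWL0
    · by_cases h2 : x t < m
      · simp only [h1, h2, if_false, if_true]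
        apply div_nonneg _ hV0
        apply mul_nonneg (mul_nonneg (hw t) (by linarith)) hWR0
      · simp [h1, h2]
  have hCW : ∀ t ∈ T, C t ≤ W - w t := by
    intro t ht
    rw [hC]
    by_cases h1 : m < x t
    · simp only [h1, if_true]
      have htR : t ∈ R := Finset.mem_filter.2 ⟨ht, h1⟩
      by_cases hVz : V = 0
      · have : w t = 0 := hVzeroR hVz t htR
        rw [this]
        simp
        rw [hWsplit]
        linarith
      · have hVpos : 0 < V := lt_of_le_of_ne hV0 (Ne.symm hVz)
        rw [div_le_iff₀ hVpos]
        have h3 : w t * (x t - m) ≤ V := Finset.single_le_sum hVterm htR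
        have h4 : WL ≤ W - w t := by
          have : w t ≤ WR := Finset.single_le_sum hwR htR
          rw [hWsplit]; linarith
        have h5 : 0 ≤ w t * (x t - m) := hVterm t htR
        nlinarith
    · by_cases h2 : x t < m
      · simp only [h1, h2, if_false, if_true]
        have htL : t ∈ L := Finset.mem_filter.2 ⟨ht, h2⟩
        by_cases hVz : V = 0
        · have : w t = 0 := hVzeroL hVz t htL
          rw [this]
          simp
          rw [hWsplit]
          linarith
        · have hVpos : 0 < V := lt_of_le_of_ne hV0 (Ne.symm hVz)
          rw [div_le_iff₀ hVpos]
          have h3 : w t * (m - x t) ≤ VL := Finset.single_le_sum hVLterm htL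
          have h3' : w t * (m - x t) ≤ V := by rw [← hVLV]; exact h3
          have h4 : WR ≤ W - w t := by
            have : w t ≤ WL := Finset.single_le_sum hwL htL
            rw [hWsplit]; linarith
          have h5 : 0 ≤ w t * (m - x t) := hVLterm t htL
          nlinarith
      · simp only [h1, h2, if_false]
        have := hwtW t ht
        linarith
  have hkey : ∀ t ∈ T, w t * (m - x t) = C t * (Q t - m) := by
    intro t ht
    rw [hC, hQ]
    by_cases h1 : m < x t
    · simp only [h1, if_true]
      have htR : t ∈ R := Finset.mem_filter.2 ⟨ht, h1⟩
      by_cases hVz : V = 0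
      · have hwt : w t = 0 := hVzeroR hVz t htR
        rw [hwt]; ring
      · have hWLnz : WL ≠ 0 := by
          intro hWLz
          apply hVz
          rw [← hVLV, hVL]
          apply Finset.sum_eq_zero
          intro u hu
          rw [hWLzero hWLz u hu]; ring
        have hqLv := hqLval hWLnz
        have hVLval : WL * (m - qL) = V := by
          have h6 : WL * m - WL * qL = VL := by
            rw [hqLv, hVL, hWL, Finset.sum_mul, ← Finset.sum_sub_distrib]
            apply Finset.sum_congr rfl
            intro u _; ring
          rw [← hVLV]; linarith [h6]
        have hVLval' : WL * (qL - m) = -V := by linarith [hVLval]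
        have hc : w t * (x t - m) * WL / V * (qL - m) = w t * (m - x t) := by
          calc w t * (x t - m) * WL / V * (qL - m)
              = (w t * (x t - m)) * (WL * (qL - m)) / V := by ring
            _ = (w t * (x t - m)) * (-V) / V := by rw [hVLval']
            _ = -((w t * (x t - m)) * (V / V)) := by ring
            _ = w t * (m - x t) := by rw [div_self hVz]; ring
        exact hc.symm
    · by_cases h2 : x t < m
      · simp only [h1, h2, if_false, if_true]
        have htL : t ∈ L := Finset.mem_filter.2 ⟨ht, h2⟩
        by_cases hVz : V = 0
        · have hwt : w t = 0 := hVzeroL hVz t htL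
          rw [hwt]; ring
        · have hWRnz : WR ≠ 0 := by
            intro hWRz
            apply hVz
            rw [hV]
            apply Finset.sum_eq_zero
            intro u hu
            rw [hWRzero hWRz u hu]; ring
          have hqRv := hqRval hWRnz
          have hVRval : WR * (qR - m) = V := by
            have h6 : WR * qR - WR * m = V := by
              rw [hqRv, hV, hWR, Finset.sum_mul, ← Finset.sum_sub_distrib]
              apply Finset.sum_congr rfl
              intro u _; ring
            linarith [h6]
          have hc : w t * (m - x t) * WR / V * (qR - m) = w t * (m - x t) := by
            calc w t * (m - x t) * WR / V * (qR - m)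
                = (w t * (m - x t)) * (WR * (qR - m)) / V := by ring
              _ = (w t * (m - x t)) * V / V := by rw [hVRval]
              _ = (w t * (m - x t)) * (V / V) := by ring
              _ = w t * (m - x t) := by rw [div_self hVz]; ring
          exact hc.symm
      · have h3 : x t = m := le_antisymm (not_lt.1 h1) (not_lt.1 h2)
        simp only [h1, h2, if_false]
        rw [h3]; ring
  -- per-s Jensen step
  have hstep : ∀ s ∈ T,
      (W + (w s - w (s + r))) *
        f ((Sx + (w s * x s - w (s + r) * x (s + r))) / (W + (w s - w (s + r)))) ≤
      w s * f (x s) + ((W - w (τ (s+r)) - C (τ (s+r))) * f m + C (τ (s+r)) * f (Q (τ (s+r)))) := by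
    intro s hs
    have hwst : w (s+r) = w (τ (s+r)) := (hgτ w hwper (s+r)).symm
    have hxst : x (s+r) = x (τ (s+r)) := (hgτ x hxper (s+r)).symm
    set t : ℤ := τ (s + r) with htdef
    have htT : t ∈ T := hτmem _
    rw [hwst, hxst]
    have hA : W + (w s - w t) = w s + (W - w t - C t) + C t := by ring
    have hAnz : w s + (W - w t - C t) + C t ≠ 0 := by
      rw [← hA, ← hwst]
      exact hws s hs
    have hApos : 0 < w s + (W - w t - C t) + C t := by
      have h1 : 0 ≤ W - w t - C t := by
        have := hCW t htT; linarith
      have := hw s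
      have := hC0 t
      rcases lt_or_eq_of_le (by linarith : (0:ℝ) ≤ w s + (W - w t - C t) + C t) with h | h
      · exact h
      · exact absurd h.symm hAnz
    have hN : Sx + (w s * x s - w t * x t) =
        w s * x s + (W - w t - C t) * m + C t * Q t := by
      have h2 := hkey t htT
      linear_combination h2 - hWm
    rw [hA, hN]
    have hj := jensen3 hf (hw s) (by have := hCW t htT; linarith) (hC0 t) hApos
      (hx s) hmI (hQI t)
    linarith [hj]
  -- sum it up
  rw [ge_iff_le]
  calc ∑ s ∈ T, (W + (w s - w (s + r))) *
        f ((Sx + (w s * x s - w (s + r) * x (s + r))) / (W + (w s - w (s + r))))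
      ≤ ∑ s ∈ T, (w s * f (x s) +
          ((W - w (τ (s+r)) - C (τ (s+r))) * f m + C (τ (s+r)) * f (Q (τ (s+r))))) :=
        Finset.sum_le_sum hstep
    _ = S + ∑ s ∈ T, ((W - w (τ (s+r)) - C (τ (s+r))) * f m + C (τ (s+r)) * f (Q (τ (s+r)))) := by
        rw [Finset.sum_add_distrib, hSdef]
    _ = S + ∑ t ∈ T, ((W - w t - C t) * f m + C t * f (Q t)) := by
        rw [hshift (fun t => (W - w t - C t) * f m + C t * f (Q t))]
    _ ≤ 2 * S + ((n:ℝ) - 2) * W * f m := by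
        have hfinal : ∑ t ∈ T, ((W - w t - C t) * f m + C t * f (Q t)) ≤
            S + ((n:ℝ) - 2) * W * f m := by
          have cardT : ((T.card : ℝ)) = (n:ℝ) := by
            rw [hT, Int.card_Icc]
            simp
          have hn2 : (2:ℝ) ≤ (n:ℝ) := by exact_mod_cast hn
          have hfirst : ∑ t ∈ T, ((W - w t - C t) * f m + C t * f (Q t)) =
              (∑ t ∈ T, (W - w t - C t)) * f m + ∑ t ∈ T, C t * f (Q t) := by
            rw [Finset.sum_add_distrib, Finset.sum_mul]
          have hsumconst : ∑ t ∈ T, (W - w t - C t) =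
              (n:ℝ)*W - W - ∑ t ∈ T, C t := by
            rw [Finset.sum_sub_distrib, Finset.sum_sub_distrib, Finset.sum_const,
              nsmul_eq_mul, cardT, ← hWdef]
          have hCMz : ∀ t ∈ M, C t = 0 := by
            intro t ht
            have hxt := (Finset.mem_filter.1 ht).2
            rw [hC]
            simp only [hxt]
            simp
          by_cases hVz : V = 0
          · -- degenerate case: all mass at the mean
            have hCz : ∀ t ∈ T, C t = 0 := by
              intro t ht
              rw [hC]
              by_cases h1 : m < x t
              · have htR : t ∈ R := Finset.mem_filter.2 ⟨ht, h1⟩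
                simp only [h1, if_true]
                rw [hVzeroR hVz t htR]
                ring_nf
              · by_cases h2 : x t < m
                · have htL : t ∈ L := Finset.mem_filter.2 ⟨ht, h2⟩
                  simp only [h1, h2, if_false, if_true]
                  rw [hVzeroL hVz t htL]
                  ring_nf
                · simp [h1, h2]
            have hSm : S = W * f m := by
              rw [hSdef, hWdef, Finset.sum_mul]
              apply Finset.sum_congr rfl
              intro t ht
              by_cases h1 : m < x t
              · have htR : t ∈ R := Finset.mem_filter.2 ⟨ht, h1⟩
                rw [hVzeroR hVz t htR]; ring
              · by_cases h2 : x t < m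
                · have htL : t ∈ L := Finset.mem_filter.2 ⟨ht, h2⟩
                  rw [hVzeroL hVz t htL]; ring
                · have h3 : x t = m := le_antisymm (not_lt.1 h1) (not_lt.1 h2)
                  rw [h3]
            have hCz' : ∑ t ∈ T, C t = 0 := Finset.sum_eq_zero hCz
            have hCfz : ∑ t ∈ T, C t * f (Q t) = 0 := by
              apply Finset.sum_eq_zero
              intro t ht
              rw [hCz t ht]; ring
            rw [hfirst, hsumconst, hCz', hCfz]
            have : ((n:ℝ)*W - W - 0) * f m + 0 = S + ((n:ℝ) - 2) * W * f m := by
              rw [hSm]; ring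
            linarith [this]
          · -- main case
            have hVpos : 0 < V := lt_of_le_of_ne hV0 (Ne.symm hVz)
            have hCR : ∀ t ∈ R, C t = (w t * (x t - m)) * (WL / V) := by
              intro t ht
              have h1 := (Finset.mem_filter.1 ht).2
              rw [hC]
              simp only [h1, if_true]
              ring
            have hCL : ∀ t ∈ L, C t = (w t * (m - x t)) * (WR / V) := by
              intro t ht
              have h2 := (Finset.mem_filter.1 ht).2
              have h1 : ¬ m < x t := by linarith
              rw [hC]
              simp only [h1, h2, if_false, if_true]
              ring
            have hCsumR : ∑ t ∈ R, C t = WL := by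
              rw [Finset.sum_congr rfl hCR, ← Finset.sum_mul, ← hV]
              field_simp
            have hCsumL : ∑ t ∈ L, C t = WR := by
              rw [Finset.sum_congr rfl hCL, ← Finset.sum_mul, ← hVL, hVLV]
              field_simp
            have hCsum : ∑ t ∈ T, C t = WL + WR := by
              rw [hsplit C, hCsumR, hCsumL, Finset.sum_eq_zero hCMz]
              ring
            have hQfR : ∑ t ∈ R, C t * f (Q t) = WL * f qL := by
              have : ∀ t ∈ R, C t * f (Q t) = C t * f qL := by
                intro t ht
                have h1 := (Finset.mem_filter.1 ht).2
                rw [hQ]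
                simp only [h1, if_true]
              rw [Finset.sum_congr rfl this, ← Finset.sum_mul, hCsumR]
            have hQfL : ∑ t ∈ L, C t * f (Q t) = WR * f qR := by
              have : ∀ t ∈ L, C t * f (Q t) = C t * f qR := by
                intro t ht
                have h2 := (Finset.mem_filter.1 ht).2
                have h1 : ¬ m < x t := by linarith
                rw [hQ]
                simp only [h1, h2, if_false, if_true]
              rw [Finset.sum_congr rfl this, ← Finset.sum_mul, hCsumL]
            have hQfM : ∑ t ∈ M, C t * f (Q t) = 0 := by
              apply Finset.sum_eq_zero
              intro t ht
              rw [hCMz t ht]; ring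
            have hQf : ∑ t ∈ T, C t * f (Q t) = WL * f qL + WR * f qR := by
              rw [hsplit (fun t => C t * f (Q t)), hQfR, hQfL, hQfM]
              ring
            have hJL : WL * f qL ≤ ∑ t ∈ L, w t * f (x t) := by
              by_cases hWLz : WL = 0
              · rw [hWLz]
                have : ∑ t ∈ L, w t * f (x t) = 0 := by
                  apply Finset.sum_eq_zero
                  intro t ht
                  rw [hWLzero hWLz t ht]; ring
                rw [this]; simp
              · have hWLpos : 0 < WL := lt_of_le_of_ne hWL0 (Ne.symm hWLz)
                have hj := jensen_sum' hf hwL (by rw [← hWL] at *; exact hWLpos)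
                  (fun t _ => hx t)
                rw [hqL]
                simp only [hWLz, if_false]
                rw [← hWL] at hj
                exact hj
            have hJR : WR * f qR ≤ ∑ t ∈ R, w t * f (x t) := by
              by_cases hWRz : WR = 0
              · rw [hWRz]
                have : ∑ t ∈ R, w t * f (x t) = 0 := by
                  apply Finset.sum_eq_zero
                  intro t ht
                  rw [hWRzero hWRz t ht]; ring
                rw [this]; simp
              · have hWRpos : 0 < WR := lt_of_le_of_ne hWR0 (Ne.symm hWRz)
                have hj := jensen_sum' hf hwR (by rw [← hWR] at *; exact hWRpos)
                  (fun t _ => hx t)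
                rw [hqR]
                simp only [hWRz, if_false]
                rw [← hWR] at hj
                exact hj
            have hSM : ∑ t ∈ M, w t * f (x t) = WM * f m := by
              rw [hWM, Finset.sum_mul]
              apply Finset.sum_congr rfl
              intro t ht
              have h3 := (Finset.mem_filter.1 ht).2
              rw [h3]
            have hSsplit : S = ∑ t ∈ L, w t * f (x t) + ∑ t ∈ R, w t * f (x t)
                + WM * f m := by
              rw [hSdef, hsplit (fun t => w t * f (x t)), hSM]
            have hco : ((n:ℝ)*W - W - (WL + WR)) * f m =
                ((n:ℝ) - 2) * W * f m + WM * f m := by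
              have : (n:ℝ)*W - W - (WL + WR) = ((n:ℝ) - 2) * W + WM := by
                rw [hWsplit]; ring
              rw [this]; ring
            rw [hfirst, hsumconst, hCsum, hQf, hco]
            linarith [hJL, hJR]
        linarith
end

section
/- Let f be convex on an interval I ⊆ ℝ, let n ≥ 2, x₁, ..., xₙ ∈ I, and let x = (x₁+...+xₙ)/n. Then 2(n−1)·∑_{i=1}^n f(xᵢ) + n(n−1)(n−2)·f(x) ≥ n·∑_{1≤i≤n, 1≤j≤n, i≠j} f(x + (xᵢ − xⱼ)/n). -/
theorem cirtoaje_cyclic_sum (I : Set ℝ) (f : ℝ → ℝ) (hf : ConvexOn ℝ I f)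
    (n : ℕ) (hn : 2 ≤ n) (x : Fin n → ℝ) (hx : ∀ i, x i ∈ I) :
    2 * ((n : ℝ) - 1) * (∑ i, f (x i)) +
      (n : ℝ) * ((n : ℝ) - 1) * ((n : ℝ) - 2) * f ((∑ i, x i) / n) ≥
    (n : ℝ) * ∑ p ∈ Finset.univ.filter (fun p : Fin n × Fin n => p.1 ≠ p.2),
      f ((∑ i, x i) / n + (x p.1 - x p.2) / n) := by
  have hnR : (2:ℝ) ≤ (n:ℝ) := by exact_mod_cast hn
  have hnpos : (0:ℝ) < (n:ℝ) := by linarith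
  have hnne : (n:ℝ) ≠ 0 := ne_of_gt hnpos
  obtain ⟨A, hA⟩ : ∃ A : ℝ, A = (∑ i, x i) / (n:ℝ) := ⟨_, rfl⟩
  rw [← hA]
  have hxsum : ∑ i, x i = (n:ℝ) * A := by rw [hA]; field_simp
  obtain ⟨e, he⟩ : ∃ e : Fin n → ℝ, e = fun i => x i - A := ⟨_, rfl⟩
  have heA : ∀ i, e i = x i - A := fun i => by rw [he]
  have hesum : ∑ i, e i = 0 := by
    simp only [he, Finset.sum_sub_distrib, Finset.sum_const, Finset.card_univ,
      Fintype.card_fin, nsmul_eq_mul, hxsum]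
    ring
  obtain ⟨S, hS⟩ : ∃ S : ℝ, S = ∑ i, max (e i) 0 := ⟨_, rfl⟩
  have hmaxneg : ∀ a : ℝ, max (-a) 0 = max a 0 - a := by
    intro a; rcases le_total a 0 with h | h
    · rw [max_eq_left (neg_nonneg.2 h), max_eq_right h]; ring
    · rw [max_eq_right (neg_nonpos.2 h), max_eq_left h]; ring
  have hS2 : ∑ i, max (-(e i)) 0 = S := by
    simp only [hmaxneg, Finset.sum_sub_distrib, hesum, hS]; ring
  have hSnn : 0 ≤ S := hS ▸ Finset.sum_nonneg fun i _ => le_max_right _ _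
  have hAI : A ∈ I := by
    have h := hf.1.sum_mem (t := Finset.univ) (w := fun _ : Fin n => (n:ℝ)⁻¹) (z := x)
      (fun i _ => by positivity)
      (by simp [Finset.sum_const, Finset.card_univ, Fintype.card_fin]; field_simp)
      (fun i _ => hx i)
    have heq : ∑ i : Fin n, (n:ℝ)⁻¹ • x i = A := by
      rw [hA]
      simp only [smul_eq_mul, ← Finset.mul_sum]
      field_simp
    rwa [heq] at h
  have hsplit : ∀ H : Fin n × Fin n → ℝ,
      (∑ p ∈ Finset.univ.filter (fun p : Fin n × Fin n => p.1 ≠ p.2), H p)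
        = (∑ i, ∑ j, H (i, j)) - ∑ i, H (i, i) := by
    intro H
    rw [Finset.sum_filter, Fintype.sum_prod_type, ← Finset.sum_sub_distrib]
    refine Finset.sum_congr rfl fun i _ => ?_
    have hpt : ∀ j, (if (i, j).1 ≠ (i, j).2 then H (i, j) else 0)
        = H (i, j) - (if j = i then H (i, j) else 0) := by
      intro j; by_cases h : j = i
      · subst h; simp
      · rw [if_pos (show (i, j).1 ≠ (i, j).2 from fun hh => h hh.symm), if_neg h]; ring
    rw [Finset.sum_congr rfl fun j _ => hpt j, Finset.sum_sub_distrib]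
    simp
  rw [ge_iff_le, Finset.mul_sum]
  by_cases hS0 : S = 0
  · -- trivial case: all x i equal to A
    have hmax0 : ∀ i, max (e i) 0 = 0 := by
      intro i
      exact (Finset.sum_eq_zero_iff_of_nonneg
        (fun i (_ : i ∈ Finset.univ) => le_max_right (e i) 0)).1 (hS ▸ hS0) i (Finset.mem_univ i)
    have hele : ∀ i, e i ≤ 0 := fun i => (le_max_left (e i) 0).trans_eq (hmax0 i)
    have he0 : ∀ i, e i = 0 := by
      intro i
      exact (Finset.sum_eq_zero_iff_of_nonpos (fun i _ => hele i)).1 hesum i (Finset.mem_univ i)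
    have hxeq : ∀ i, x i = A := by
      intro i
      have h := he0 i
      rw [heA i] at h
      linarith
    have hterm : ∀ p : Fin n × Fin n, A + (x p.1 - x p.2) / (n:ℝ) = A := by
      intro p; rw [hxeq p.1, hxeq p.2]; simp
    calc ∑ p ∈ Finset.univ.filter (fun p : Fin n × Fin n => p.1 ≠ p.2),
          (n:ℝ) * f (A + (x p.1 - x p.2) / (n:ℝ))
        = ∑ p ∈ Finset.univ.filter (fun p : Fin n × Fin n => p.1 ≠ p.2), (n:ℝ) * f A :=
          Finset.sum_congr rfl fun p _ => by rw [hterm p]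
      _ = (∑ _i : Fin n, ∑ _j : Fin n, (n:ℝ) * f A) - ∑ _i : Fin n, (n:ℝ) * f A := hsplit _
      _ ≤ 2 * ((n : ℝ) - 1) * (∑ i, f (x i)) + (n : ℝ) * ((n : ℝ) - 1) * ((n : ℝ) - 2) * f A := by
          have hfs : ∑ i, f (x i) = (n:ℝ) * f A := by
            rw [Finset.sum_congr rfl fun i _ => by rw [hxeq i]]
            simp [Finset.sum_const, Finset.card_univ, Fintype.card_fin, nsmul_eq_mul]
          simp only [Finset.sum_const, Finset.card_univ, Fintype.card_fin, nsmul_eq_mul]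
          rw [hfs]
          exact le_of_eq (by ring)
  · -- main case
    have hSpos : 0 < S := lt_of_le_of_ne hSnn (Ne.symm hS0)
    obtain ⟨lam, hlam⟩ : ∃ lam : Fin n → Fin n → ℝ,
        lam = fun j k => (if e k < 0 then max (e j) 0 else max (-(e j)) 0) / S := ⟨_, rfl⟩
    have hlamval : ∀ j k, lam j k = (if e k < 0 then max (e j) 0 else max (-(e j)) 0) / S :=
      fun j k => by rw [hlam]
    have hlamnn : ∀ j k, 0 ≤ lam j k := by
      intro j k
      rw [hlamval]
      apply div_nonneg _ hSpos.le
      split <;> exact le_max_right _ _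
    have hmaxleS : ∀ j, max (e j) 0 ≤ S :=
      fun j => hS ▸ Finset.single_le_sum (f := fun i => max (e i) 0)
        (fun i _ => le_max_right _ _) (Finset.mem_univ j)
    have hmaxnegleS : ∀ j, max (-(e j)) 0 ≤ S :=
      fun j => (Finset.single_le_sum (f := fun i => max (-(e i)) 0)
        (fun i _ => le_max_right _ _) (Finset.mem_univ j)).trans_eq hS2
    have hlamle1 : ∀ j k, lam j k ≤ 1 := by
      intro j k
      rw [hlamval, div_le_one hSpos]
      split
      · exact hmaxleS j
      · exact hmaxnegleS j
    have hlamdiag : ∀ j, lam j j = 0 := by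
      intro j
      rw [hlamval]
      by_cases h : e j < 0
      · rw [if_pos h, max_eq_right h.le, zero_div]
      · rw [if_neg h, max_eq_right (neg_nonpos.2 (not_lt.1 h)), zero_div]
    have hrowle : ∀ j, ∑ k, lam j k ≤ (n:ℝ) - 1 := by
      intro j
      rw [← Finset.add_sum_erase _ _ (Finset.mem_univ j), hlamdiag j, zero_add]
      calc ∑ k ∈ Finset.univ.erase j, lam j k
          ≤ (Finset.univ.erase j).card • (1:ℝ) :=
            Finset.sum_le_card_nsmul _ _ _ (fun k _ => hlamle1 j k)
        _ = (n:ℝ) - 1 := by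
            rw [Finset.card_erase_of_mem (Finset.mem_univ j), Finset.card_univ, Fintype.card_fin,
              nsmul_eq_mul, mul_one, Nat.cast_sub (by omega), Nat.cast_one]
    -- filter sums
    have hNmax : ∑ k ∈ Finset.univ.filter (fun k => e k < 0), max (e k) 0 = 0 :=
      Finset.sum_eq_zero fun k hk => max_eq_right (le_of_lt (Finset.mem_filter.1 hk).2)
    have hPsum : ∑ k ∈ Finset.univ.filter (fun k => ¬ e k < 0), e k = S := by
      have h := Finset.sum_filter_add_sum_filter_not Finset.univ (fun k => e k < 0)
        (fun k => max (e k) 0)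
      rw [hNmax, zero_add, ← hS] at h
      calc ∑ k ∈ Finset.univ.filter (fun k => ¬ e k < 0), e k
          = ∑ k ∈ Finset.univ.filter (fun k => ¬ e k < 0), max (e k) 0 :=
            Finset.sum_congr rfl fun k hk =>
              (max_eq_left (not_lt.1 (Finset.mem_filter.1 hk).2)).symm
        _ = S := h
    have hNsum : ∑ k ∈ Finset.univ.filter (fun k => e k < 0), e k = -S := by
      have h := Finset.sum_filter_add_sum_filter_not Finset.univ (fun k => e k < 0) e
      rw [hPsum, hesum] at h
      linarith
    have hrowe : ∀ j, ∑ k, lam j k * e k = -(e j) := by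
      intro j
      rw [← Finset.sum_filter_add_sum_filter_not Finset.univ (fun k => e k < 0)
        (fun k => lam j k * e k)]
      have h1 : ∑ k ∈ Finset.univ.filter (fun k => e k < 0), lam j k * e k
          = (max (e j) 0 / S) * (-S) := by
        calc ∑ k ∈ Finset.univ.filter (fun k => e k < 0), lam j k * e k
            = ∑ k ∈ Finset.univ.filter (fun k => e k < 0), (max (e j) 0 / S) * e k :=
              Finset.sum_congr rfl fun k hk => by
                rw [hlamval, if_pos (Finset.mem_filter.1 hk).2]
          _ = (max (e j) 0 / S) * ∑ k ∈ Finset.univ.filter (fun k => e k < 0), e k := by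
              rw [Finset.mul_sum]
          _ = (max (e j) 0 / S) * (-S) := by rw [hNsum]
      have h2 : ∑ k ∈ Finset.univ.filter (fun k => ¬ e k < 0), lam j k * e k
          = (max (-(e j)) 0 / S) * S := by
        calc ∑ k ∈ Finset.univ.filter (fun k => ¬ e k < 0), lam j k * e k
            = ∑ k ∈ Finset.univ.filter (fun k => ¬ e k < 0), (max (-(e j)) 0 / S) * e k :=
              Finset.sum_congr rfl fun k hk => by
                rw [hlamval, if_neg (Finset.mem_filter.1 hk).2]
          _ = (max (-(e j)) 0 / S) * ∑ k ∈ Finset.univ.filter (fun k => ¬ e k < 0), e k := by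
              rw [Finset.mul_sum]
          _ = (max (-(e j)) 0 / S) * S := by rw [hPsum]
      rw [h1, h2, hmaxneg]
      field_simp
      ring
    have hcol : ∀ k, ∑ j, lam j k = 1 := by
      intro k
      by_cases hk : e k < 0
      · calc ∑ j, lam j k = ∑ j, max (e j) 0 / S :=
            Finset.sum_congr rfl fun j _ => by rw [hlamval, if_pos hk]
          _ = S / S := by rw [← Finset.sum_div, ← hS]
          _ = 1 := div_self (ne_of_gt hSpos)
      · calc ∑ j, lam j k = ∑ j, max (-(e j)) 0 / S :=
            Finset.sum_congr rfl fun j _ => by rw [hlamval, if_neg hk]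
          _ = S / S := by rw [← Finset.sum_div, hS2]
          _ = 1 := div_self (ne_of_gt hSpos)
    have hxlam : ∀ j, ∑ k, lam j k * x k = -(e j) + (∑ k, lam j k) * A := by
      intro j
      have hpt : ∀ k, lam j k * x k = lam j k * e k + lam j k * A := by
        intro k; rw [heA k]; ring
      rw [Finset.sum_congr rfl fun k _ => hpt k, Finset.sum_add_distrib, hrowe j,
        ← Finset.sum_mul]
    -- key per-pair Jensen inequality
    have key : ∀ i j : Fin n, (n:ℝ) * f (A + (x i - x j) / (n:ℝ))
        ≤ f (x i) + (∑ k, lam j k * f (x k)) + (((n:ℝ) - 1) - ∑ k, lam j k) * f A := by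
      intro i j
      have hr0 : 0 ≤ ∑ k, lam j k := Finset.sum_nonneg fun k _ => hlamnn j k
      have hrle := hrowle j
      have hite : ∑ k : Fin n, (if k = i then (1:ℝ) else 0) = 1 := by simp
      have hitex : ∑ k : Fin n, (if k = i then (1:ℝ) else 0) * x k = x i := by
        simp [ite_mul]
      have hitefx : ∑ k : Fin n, (if k = i then (1:ℝ) else 0) * f (x k) = f (x i) := by
        simp [ite_mul]
      have hw1 : (((n:ℝ) - 1 - ∑ k, lam j k) / (n:ℝ))
          + ∑ k : Fin n, ((if k = i then (1:ℝ) else 0) + lam j k) / (n:ℝ) = 1 := by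
        rw [← Finset.sum_div, Finset.sum_add_distrib, hite, ← add_div]
        field_simp
        ring
      have hjen := hf.map_add_sum_le (t := Finset.univ)
        (w := fun k => ((if k = i then (1:ℝ) else 0) + lam j k) / (n:ℝ)) (p := x)
        (v := ((n:ℝ) - 1 - ∑ k, lam j k) / (n:ℝ)) (q := A)
        (fun k _ => div_nonneg (add_nonneg (by positivity) (hlamnn j k)) hnpos.le)
        hw1
        (fun k _ => hx k)
        (div_nonneg (by linarith) hnpos.le) hAI
      have hpt : (((n:ℝ) - 1 - ∑ k, lam j k) / (n:ℝ)) • A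
          + ∑ k : Fin n, ((((if k = i then (1:ℝ) else 0) + lam j k) / (n:ℝ)) • x k)
          = A + (x i - x j) / (n:ℝ) := by
        simp only [smul_eq_mul]
        have hws : ∑ k : Fin n, (((if k = i then (1:ℝ) else 0) + lam j k) / (n:ℝ)) * x k
            = ∑ k : Fin n, ((if k = i then (1:ℝ) else 0) * x k / (n:ℝ)
              + lam j k * x k / (n:ℝ)) :=
          Finset.sum_congr rfl fun k _ => by ring
        rw [hws, Finset.sum_add_distrib, ← Finset.sum_div, ← Finset.sum_div, hitex, hxlam j]
        rw [heA j]
        field_simp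
        ring
      have hrhs : (((n:ℝ) - 1 - ∑ k, lam j k) / (n:ℝ)) • f A
          + ∑ k : Fin n, ((((if k = i then (1:ℝ) else 0) + lam j k) / (n:ℝ)) • f (x k))
          = (f (x i) + (∑ k, lam j k * f (x k)) + (((n:ℝ) - 1) - ∑ k, lam j k) * f A)
            / (n:ℝ) := by
        simp only [smul_eq_mul]
        have hws : ∑ k : Fin n, (((if k = i then (1:ℝ) else 0) + lam j k) / (n:ℝ)) * f (x k)
            = ∑ k : Fin n, ((if k = i then (1:ℝ) else 0) * f (x k) / (n:ℝ)
              + lam j k * f (x k) / (n:ℝ)) :=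
          Finset.sum_congr rfl fun k _ => by ring
        rw [hws, Finset.sum_add_distrib, ← Finset.sum_div, ← Finset.sum_div, hitefx]
        field_simp
        ring
      rw [hpt, hrhs] at hjen
      calc (n:ℝ) * f (A + (x i - x j) / (n:ℝ))
          ≤ (n:ℝ) * ((f (x i) + (∑ k, lam j k * f (x k))
              + (((n:ℝ) - 1) - ∑ k, lam j k) * f A) / (n:ℝ)) :=
            mul_le_mul_of_nonneg_left hjen hnpos.le
        _ = _ := by field_simp
    -- global accounting
    have hL : ∑ j, ∑ k, lam j k * f (x k) = ∑ k, f (x k) := by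
      rw [Finset.sum_comm]
      exact Finset.sum_congr rfl fun k _ => by rw [← Finset.sum_mul, hcol k, one_mul]
    have hR : ∑ j : Fin n, ∑ k, lam j k = (n:ℝ) := by
      rw [Finset.sum_comm]
      simp [hcol, Finset.sum_const, Finset.card_univ, Fintype.card_fin]
    have hmu : ∑ j : Fin n, (((n:ℝ) - 1) - ∑ k, lam j k) = ((n:ℝ) - 1) * (n:ℝ) - (n:ℝ) := by
      rw [Finset.sum_sub_distrib, hR, Finset.sum_const, Finset.card_univ, Fintype.card_fin,
        nsmul_eq_mul]
      ring
    calc ∑ p ∈ Finset.univ.filter (fun p : Fin n × Fin n => p.1 ≠ p.2),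
          (n:ℝ) * f (A + (x p.1 - x p.2) / (n:ℝ))
        ≤ ∑ p ∈ Finset.univ.filter (fun p : Fin n × Fin n => p.1 ≠ p.2),
            (f (x p.1) + (∑ k, lam p.2 k * f (x k))
              + (((n:ℝ) - 1) - ∑ k, lam p.2 k) * f A) :=
          Finset.sum_le_sum fun p _ => key p.1 p.2
      _ = (∑ i, ∑ j, (f (x i) + (∑ k, lam j k * f (x k))
              + (((n:ℝ) - 1) - ∑ k, lam j k) * f A))
          - ∑ i, (f (x i) + (∑ k, lam i k * f (x k))
              + (((n:ℝ) - 1) - ∑ k, lam i k) * f A) := hsplit _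
      _ = 2 * ((n : ℝ) - 1) * (∑ i, f (x i))
          + (n : ℝ) * ((n : ℝ) - 1) * ((n : ℝ) - 2) * f A := by
          have hinner : ∀ i : Fin n, ∑ j, (f (x i) + (∑ k, lam j k * f (x k))
              + (((n:ℝ) - 1) - ∑ k, lam j k) * f A)
              = (n:ℝ) * f (x i) + (∑ k, f (x k))
                + (((n:ℝ) - 1) * (n:ℝ) - (n:ℝ)) * f A := by
            intro i
            rw [Finset.sum_add_distrib, Finset.sum_add_distrib, hL, ← Finset.sum_mul, hmu,
              Finset.sum_const, Finset.card_univ, Fintype.card_fin, nsmul_eq_mul]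
          have hdiag : ∑ i, (f (x i) + (∑ k, lam i k * f (x k))
              + (((n:ℝ) - 1) - ∑ k, lam i k) * f A)
              = (∑ i, f (x i)) + (∑ k, f (x k))
                + (((n:ℝ) - 1) * (n:ℝ) - (n:ℝ)) * f A := by
            rw [Finset.sum_add_distrib, Finset.sum_add_distrib, hL, ← Finset.sum_mul, hmu]
          rw [Finset.sum_congr rfl fun i _ => hinner i, hdiag, Finset.sum_add_distrib,
            Finset.sum_add_distrib, ← Finset.mul_sum, Finset.sum_const, Finset.sum_const,
            Finset.card_univ, Fintype.card_fin, nsmul_eq_mul, nsmul_eq_mul]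
          ring
end

section
/- Let a, b, c, d be four nonnegative reals. Then a⁴ + b⁴ + c⁴ + d⁴ + 4abcd ≥ 2(a²bc + b²cd + c²da + d²ab). -/
set_option maxHeartbeats 1000000 in
theorem rozenberg (a b c d : ℝ) (ha : 0 ≤ a) (hb : 0 ≤ b) (hc : 0 ≤ c) (hd : 0 ≤ d) :
    a ^ 4 + b ^ 4 + c ^ 4 + d ^ 4 + 4 * (a * b * c * d) ≥
      2 * (a ^ 2 * b * c + b ^ 2 * c * d + c ^ 2 * d * a + d ^ 2 * a * b) := by
  linarith [sq_nonneg (2*b^2 - b*d - c^2),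
    mul_nonneg (mul_nonneg hc hd) (sq_nonneg (-a+b-c+d)),
    sq_nonneg (2*d^2 - a*d - b^2),
    sq_nonneg (2*a*d - b*c - b*d),
    sq_nonneg (a*c + b*d - a*d - b*c),
    mul_nonneg (mul_nonneg ha hc) (sq_nonneg (-a+b+c-d)),
    sq_nonneg (2*d^2 - b*d - c^2),
    mul_nonneg (mul_nonneg ha hb) (sq_nonneg (a-b)),
    sq_nonneg (a^2 + a*c - c^2 - c*d),
    sq_nonneg (2*a^2 - a*d - c^2),
    sq_nonneg (a*b + c*d - a*d - b*c),
    sq_nonneg (2*a^2 - a*b - a*d),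
    sq_nonneg (2*b^2 - a*b - c^2),
    sq_nonneg (2*c^2 - a*c - d^2),
    mul_nonneg (mul_nonneg hc hd) (sq_nonneg (c-d)),
    sq_nonneg (2*c^2 - a^2 - c*d),
    sq_nonneg (2*c^2 - a^2 - d^2),
    sq_nonneg (2*b^2 - a*d - d^2),
    sq_nonneg (2*c*d - a^2 - b*c),
    sq_nonneg (a^2 + c*d - a*c - d^2),
    sq_nonneg (a*b + c^2 - a*c - b^2),
    sq_nonneg (a*b + c*d - a*c - b*d),
    sq_nonneg (a^2 + c*d - a*c - a*d),
    mul_nonneg (mul_nonneg ha hd) (sq_nonneg (a-d)),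
    sq_nonneg (2*b^2 - c^2 - d^2),
    sq_nonneg (a^2 + b*d - b*c - d^2),
    mul_nonneg (mul_nonneg ha hc) (sq_nonneg (-a+b-c+d)),
    mul_nonneg (mul_nonneg hb hd) (sq_nonneg (-a-b+c+d)),
    sq_nonneg (2*a^2 - a*b - c^2)]
end
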